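/- arXiv:2407.08565 — 6 statements merged into one kernel-verified Lean document; each statement's English description precedes it below -/
import Mathlib

section
/- The series representation of the inverted TMA(1) error process satisfies the inversion recursion (equation (ept) solves equation (tma.ep)): Let (x_t)_{t∈ℤ} and (a_t)_{t∈ℤ} be real sequences, σ > 0, and ρ ∈ (0,1) such that |a_t| ≤ ρ for all t and Σ_{j=0}^∞ ρ^j |x_{t−j}| < ∞ for every t. Define ε_t = σ^{-1}( x_t + Σ_{j=1}^∞ ( ∏_{i=1}^{j} a_{t−i} ) x_{t−j} ). Then the series defining ε_t converges absolutely for every t, and for every t ∈ ℤ one has ε_t = σ^{-1} x_t + a_{t−1} ε_{t−1}. -/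
lemma prod_shift (a : ℤ → ℝ) (t : ℤ) (k : ℕ) :
    (∏ i ∈ Finset.Icc 1 (k + 1), a (t - (i : ℤ)))
      = a (t - 1) * ∏ i ∈ Finset.Icc 1 k, a (t - 1 - (i : ℤ)) := by
  induction k with
  | zero => simp
  | succ k ih =>
      rw [Finset.prod_Icc_succ_top (by omega), ih,
        Finset.prod_Icc_succ_top (Nat.le_add_left 1 k)]
      have h2 : t - ((k + 1 + 1 : ℕ) : ℤ) = t - 1 - ((k + 1 : ℕ) : ℤ) := by push_cast; ring
      rw [h2]
      ring

/-- The series representation of the inverted TMA(1) error process satisfies the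
inversion recursion: if `|a_t| ≤ ρ < 1` and `Σ_j ρ^j |x_{t−j}| < ∞` for every `t`,
then the series `ε_t = σ⁻¹(x_t + Σ_{j≥1} (∏_{i=1}^j a_{t−i}) x_{t−j})`
(here written as `σ⁻¹ Σ_{j≥0} (∏_{i=1}^j a_{t−i}) x_{t−j}`, the `j = 0` term being `x_t`)
converges absolutely for every `t`, and `ε_t = σ⁻¹ x_t + a_{t−1} ε_{t−1}`. -/
theorem stmt4 (x a : ℤ → ℝ) (σ ρ : ℝ) (hσ : 0 < σ) (hρ : ρ ∈ Set.Ioo (0 : ℝ) 1)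
    (ha : ∀ t : ℤ, |a t| ≤ ρ)
    (hsum : ∀ t : ℤ, Summable (fun j : ℕ => ρ ^ j * |x (t - j)|)) :
    (∀ t : ℤ, Summable (fun j : ℕ =>
        |(∏ i ∈ Finset.Icc 1 j, a (t - (i : ℤ))) * x (t - j)|)) ∧
    (∀ t : ℤ,
        σ⁻¹ * (∑' j : ℕ, (∏ i ∈ Finset.Icc 1 j, a (t - (i : ℤ))) * x (t - j))
          = σ⁻¹ * x t
            + a (t - 1) *
              (σ⁻¹ * (∑' j : ℕ, (∏ i ∈ Finset.Icc 1 j, a (t - 1 - (i : ℤ))) * x (t - 1 - j)))) := by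
  obtain ⟨hρ0, hρ1⟩ := hρ
  have hb : ∀ t : ℤ, ∀ j : ℕ,
      |(∏ i ∈ Finset.Icc 1 j, a (t - (i : ℤ))) * x (t - j)| ≤ ρ ^ j * |x (t - j)| := by
    intro t j
    rw [abs_mul]
    apply mul_le_mul_of_nonneg_right _ (abs_nonneg _)
    calc |∏ i ∈ Finset.Icc 1 j, a (t - (i : ℤ))|
        = ∏ i ∈ Finset.Icc 1 j, |a (t - (i : ℤ))| := by rw [Finset.abs_prod]
      _ ≤ ∏ i ∈ Finset.Icc 1 j, ρ :=
          Finset.prod_le_prod (fun i _ => abs_nonneg _) (fun i _ => ha _)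
      _ = ρ ^ j := by simp
  have hS : ∀ t : ℤ, Summable (fun j : ℕ =>
      |(∏ i ∈ Finset.Icc 1 j, a (t - (i : ℤ))) * x (t - j)|) := by
    intro t
    exact (hsum t).of_nonneg_of_le (fun j => abs_nonneg _) (hb t)
  refine ⟨hS, fun t => ?_⟩
  have hSf : ∀ t : ℤ, Summable (fun j : ℕ =>
      (∏ i ∈ Finset.Icc 1 j, a (t - (i : ℤ))) * x (t - j)) := fun t => (hS t).of_abs
  have hshift : ∀ k : ℕ,
      (∏ i ∈ Finset.Icc 1 (k + 1), a (t - (i : ℤ))) * x (t - (k + 1 : ℕ))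
        = a (t - 1) * ((∏ i ∈ Finset.Icc 1 k, a (t - 1 - (i : ℤ))) * x (t - 1 - k)) := by
    intro k
    rw [prod_shift]
    have : t - ((k : ℤ) + 1) = t - 1 - k := by ring
    push_cast
    rw [this]
    ring
  rw [Summable.tsum_eq_zero_add (hSf t)]
  simp only [hshift]
  rw [tsum_mul_left]
  simp only [Finset.Icc_self, Nat.cast_zero, sub_zero]
  simp
  ring
end

section
/- Lemma on moments of the inverted errors (Lemma A.3 of the paper, part 1): In the TMA(1) setup, almost surely, for every t ∈ ℤ and every θ ∈ Θ the series Σ_{j=1}^∞ |∏_{i=1}^{j} A_{t−i}(θ)| · |X_{t−j}| converges (so ε_t(θ) is well defined), and for every real d ≥ 1 and every t ∈ ℤ, E[ sup_{θ∈Θ} |ε_t(θ)|^d ] < ∞. -/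
/-!
For `θ ∈ Θ` every coefficient satisfies `|A_t(θ)| ≤ c₁`, so, uniformly in `θ`, `|ε_t(θ)|` is
dominated by `c₂^{-1/2} D_t` with `D_t = Σ_j c₁^j |X_{t-j}|`, and the model gives
`|X_s| ≤ √c₃ (|e_{s-1}| + |e_s|)`. Hölder's inequality with the geometric weights `c₁^j` yields
`E[D_t^d] ≤ (1 - c₁)^{-d} sup_s E|X_s|^d`, which is finite because Gaussians have all moments.
The case `d = 1` makes `D_t` finite almost surely, which is the absolute convergence.
-/

open MeasureTheory ProbabilityTheory

/-- TMA(1) parameter space `Θ = {(φ, ξ, σ²) : |φ| ≤ c₁, |φ+ξ| ≤ c₁, c₂ ≤ σ² ≤ c₃}`. -/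
def tmaTheta (c₁ c₂ c₃ : ℝ) : Set (ℝ × ℝ × ℝ) :=
  {θ | |θ.1| ≤ c₁ ∧ |θ.1 + θ.2.1| ≤ c₁ ∧ c₂ ≤ θ.2.2 ∧ θ.2.2 ≤ c₃}

/-- Inversion coefficient `A_t(θ) = -(φ + ξ·1{X_t ≤ u})`. -/
noncomputable def tmaA {Ω : Type*} (X : ℤ → Ω → ℝ) (u : ℝ) (θ : ℝ × ℝ × ℝ)
    (t : ℤ) (ω : Ω) : ℝ :=
  -(θ.1 + θ.2.1 * (if X t ω ≤ u then 1 else 0))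

/-- Inverted error `ε_t(θ) = σ⁻¹(X_t + Σ_{j≥1} (∏_{i=1}^j A_{t−i}(θ)) X_{t−j})`, written as
`σ⁻¹ Σ_{j≥0} (∏_{i=1}^j A_{t−i}(θ)) X_{t−j}` (the `j = 0` term is `X_t`), `σ = √(σ²)`. -/
noncomputable def tmaEps {Ω : Type*} (X : ℤ → Ω → ℝ) (u : ℝ) (θ : ℝ × ℝ × ℝ)
    (t : ℤ) (ω : Ω) : ℝ :=
  (Real.sqrt θ.2.2)⁻¹ *
    ∑' j : ℕ, (∏ i ∈ Finset.Icc 1 j, tmaA X u θ (t - (i : ℤ)) ω) * X (t - j) ω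

open scoped ENNReal NNReal

namespace ENNReal

theorem rpow_sum_mul_le {ι : Type*} (s : Finset ι) (w f : ι → ℝ≥0∞) {p : ℝ} (hp : 1 ≤ p) :
    (∑ i ∈ s, w i * f i) ^ p ≤ (∑ i ∈ s, w i) ^ (p - 1) * ∑ i ∈ s, w i * f i ^ p := by
  have hp0 : 0 < p := one_pos.trans_le hp
  calc (∑ i ∈ s, w i * f i) ^ p
      ≤ ((∑ i ∈ s, w i) ^ (1 - p⁻¹) * (∑ i ∈ s, w i * f i ^ p) ^ p⁻¹) ^ p :=
        rpow_le_rpow (inner_le_weight_mul_Lp_of_nonneg s hp w f) hp0.le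
    _ = (∑ i ∈ s, w i) ^ (p - 1) * ∑ i ∈ s, w i * f i ^ p := by
        rw [mul_rpow_of_nonneg _ _ hp0.le, ← rpow_mul, ← rpow_mul, sub_mul, one_mul,
          inv_mul_cancel₀ hp0.ne', rpow_one]

theorem rpow_tsum_mul_le {ι : Type*} (w f : ι → ℝ≥0∞) {p : ℝ} (hp : 1 ≤ p) :
    (∑' i, w i * f i) ^ p ≤ (∑' i, w i) ^ (p - 1) * ∑' i, w i * f i ^ p := by
  have hsup : (⨆ s : Finset ι, ∑ i ∈ s, w i * f i) ^ p
      = ⨆ s : Finset ι, (∑ i ∈ s, w i * f i) ^ p :=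
    map_iSup (orderIsoRpow p (one_pos.trans_le hp)) _
  rw [ENNReal.tsum_eq_iSup_sum, hsup]
  refine iSup_le fun s => (rpow_sum_mul_le s w f hp).trans ?_
  gcongr
  · exact ENNReal.sum_le_tsum s
  · exact ENNReal.sum_le_tsum s

end ENNReal

section Moments

variable {Ω : Type*} [MeasurableSpace Ω] {P : Measure Ω}

theorem lintegral_rpow_tsum_mul_le {ι : Type*} [Countable ι] (w : ι → ℝ≥0∞)
    {Z : ι → Ω → ℝ≥0∞} (hZ : ∀ i, AEMeasurable (Z i) P) {p : ℝ} (hp : 1 ≤ p) {M : ℝ≥0∞}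
    (hM : ∀ i, ∫⁻ ω, Z i ω ^ p ∂P ≤ M) :
    ∫⁻ ω, (∑' i, w i * Z i ω) ^ p ∂P ≤ (∑' i, w i) ^ p * M := by
  have hZp : ∀ i, AEMeasurable (fun ω => w i * Z i ω ^ p) P :=
    fun i => ((hZ i).pow_const p).const_mul (w i)
  calc ∫⁻ ω, (∑' i, w i * Z i ω) ^ p ∂P
      ≤ ∫⁻ ω, (∑' i, w i) ^ (p - 1) * ∑' i, w i * Z i ω ^ p ∂P :=
        lintegral_mono fun ω => ENNReal.rpow_tsum_mul_le w (Z · ω) hp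
    _ = (∑' i, w i) ^ (p - 1) * ∑' i, w i * ∫⁻ ω, Z i ω ^ p ∂P := by
        rw [lintegral_const_mul'' _ (AEMeasurable.tsum hZp), lintegral_tsum hZp]
        simp only [lintegral_const_mul'' _ ((hZ _).pow_const p)]
    _ ≤ (∑' i, w i) ^ (p - 1) * ∑' i, w i * M := by gcongr with i; exact hM i
    _ = (∑' i, w i) ^ p * M := by
        rw [ENNReal.tsum_mul_right, ← mul_assoc]
        congr 1
        conv_rhs => rw [← sub_add_cancel p 1,
          ENNReal.rpow_add_of_nonneg _ _ (by linarith) zero_le_one, ENNReal.rpow_one]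

theorem lintegral_rpow_tsum_enorm_geometric_mul_lt_top {Z : ℕ → Ω → ℝ}
    (hZ : ∀ j, Measurable (Z j)) {c : ℝ} (hc : |c| < 1) {p : ℝ} (hp : 1 ≤ p) {M : ℝ≥0∞}
    (hM : M ≠ ⊤) (hZM : ∀ j, ∫⁻ ω, ‖Z j ω‖ₑ ^ p ∂P ≤ M) :
    ∫⁻ ω, (∑' j, ‖c ^ j * Z j ω‖ₑ) ^ p ∂P < ⊤ := by
  have hc' : ‖c‖ₑ < 1 := by
    rwa [Real.enorm_eq_ofReal_abs, ENNReal.ofReal_lt_one]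
  have hgeom : ∑' j : ℕ, ‖c‖ₑ ^ j ≠ ⊤ := by
    rw [ENNReal.tsum_geometric]
    exact ENNReal.inv_ne_top.2 (tsub_pos_of_lt hc').ne'
  simp only [enorm_mul, enorm_pow]
  refine (lintegral_rpow_tsum_mul_le _ (fun j => (hZ j).enorm.aemeasurable) hp hZM).trans_lt ?_
  finiteness

theorem lintegral_enorm_rpow_gaussianReal_lt_top (m : ℝ) (v : ℝ≥0) {p : ℝ} (hp : 0 < p) :
    ∫⁻ x, ‖x‖ₑ ^ p ∂gaussianReal m v < ⊤ := by
  simpa [ENNReal.toReal_ofReal hp.le] using lintegral_rpow_enorm_lt_top_of_eLpNorm_lt_top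
    (ENNReal.ofReal_pos.mpr hp).ne' ENNReal.ofReal_ne_top
    (memLp_id_gaussianReal' (μ := m) (v := v) _ ENNReal.ofReal_ne_top).eLpNorm_lt_top

theorem lintegral_enorm_rpow_le_of_le_add {ν : Measure ℝ} {X Y₁ Y₂ : Ω → ℝ}
    (hY₁ : Measurable Y₁) (hY₂ : Measurable Y₂) (hν₁ : P.map Y₁ = ν) (hν₂ : P.map Y₂ = ν)
    {K : ℝ≥0∞} (hX : ∀ᵐ ω ∂P, ‖X ω‖ₑ ≤ K * (‖Y₁ ω‖ₑ + ‖Y₂ ω‖ₑ)) {p : ℝ} (hp : 1 ≤ p) :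
    ∫⁻ ω, ‖X ω‖ₑ ^ p ∂P ≤ K ^ p * 2 ^ (p - 1) * (2 * ∫⁻ x, ‖x‖ₑ ^ p ∂ν) := by
  have hmoment : ∀ Y : Ω → ℝ, Measurable Y → P.map Y = ν →
      ∫⁻ ω, ‖Y ω‖ₑ ^ p ∂P = ∫⁻ x, ‖x‖ₑ ^ p ∂ν := by
    intro Y hY hYν
    rw [← hYν, lintegral_map (by fun_prop) hY]
  calc ∫⁻ ω, ‖X ω‖ₑ ^ p ∂P
      ≤ ∫⁻ ω, K ^ p * 2 ^ (p - 1) * (‖Y₁ ω‖ₑ ^ p + ‖Y₂ ω‖ₑ ^ p) ∂P := by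
        refine lintegral_mono_ae (hX.mono fun ω hω => ?_)
        calc ‖X ω‖ₑ ^ p ≤ (K * (‖Y₁ ω‖ₑ + ‖Y₂ ω‖ₑ)) ^ p := by gcongr
          _ = K ^ p * (‖Y₁ ω‖ₑ + ‖Y₂ ω‖ₑ) ^ p :=
            ENNReal.mul_rpow_of_nonneg _ _ (zero_le_one.trans hp)
          _ ≤ _ := by
            rw [mul_assoc]
            gcongr
            exact ENNReal.rpow_add_le_mul_rpow_add_rpow _ _ hp
    _ = K ^ p * 2 ^ (p - 1) * (2 * ∫⁻ x, ‖x‖ₑ ^ p ∂ν) := by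
        rw [lintegral_const_mul _ (by fun_prop), lintegral_add_left (by fun_prop),
          hmoment Y₁ hY₁ hν₁, hmoment Y₂ hY₂ hν₂, two_mul]

end Moments

section TMA

variable {Ω : Type*} {X : ℤ → Ω → ℝ} {u c₁ c₂ c₃ : ℝ} {θ : ℝ × ℝ × ℝ}

theorem abs_tmaA_le (hθ : θ ∈ tmaTheta c₁ c₂ c₃) (s : ℤ) (ω : Ω) : |tmaA X u θ s ω| ≤ c₁ := by
  obtain ⟨hφ, hφξ, -, -⟩ := hθ
  simp only [tmaA, abs_neg]
  split_ifs
  · simpa using hφξ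
  · simpa using hφ

theorem norm_prod_tmaA_mul_le (hθ : θ ∈ tmaTheta c₁ c₂ c₃) (t : ℤ) (j : ℕ) (ω : Ω) (x : ℝ) :
    ‖(∏ i ∈ Finset.Icc 1 j, tmaA X u θ (t - i) ω) * x‖ ≤ ‖c₁ ^ j * x‖ := by
  have hc₁ : 0 ≤ c₁ := (abs_nonneg _).trans hθ.1
  rw [norm_mul, norm_mul, norm_pow, Real.norm_of_nonneg hc₁, norm_prod]
  gcongr
  calc ∏ i ∈ Finset.Icc 1 j, ‖tmaA X u θ (t - i) ω‖ ≤ ∏ _i ∈ Finset.Icc 1 j, c₁ :=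
        Finset.prod_le_prod (fun _ _ => norm_nonneg _) fun _ _ => abs_tmaA_le hθ _ ω
    _ = c₁ ^ j := by rw [Finset.prod_const, Nat.card_Icc, Nat.add_sub_cancel]

theorem enorm_tmaEps_le (hc₂ : 0 < c₂) (hθ : θ ∈ tmaTheta c₁ c₂ c₃) (t : ℤ) (ω : Ω) :
    ‖tmaEps X u θ t ω‖ₑ ≤ ‖(√c₂)⁻¹‖ₑ * ∑' j : ℕ, ‖c₁ ^ j * X (t - j) ω‖ₑ := by
  rw [tmaEps, enorm_mul]
  gcongr
  · rw [enorm_le_iff_norm_le, norm_inv, norm_inv, Real.norm_of_nonneg (Real.sqrt_nonneg _),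
      Real.norm_of_nonneg (Real.sqrt_nonneg _)]
    exact inv_anti₀ (Real.sqrt_pos.2 hc₂) (Real.sqrt_le_sqrt hθ.2.2.1)
  · refine enorm_tsum_le_tsum_enorm.trans (ENNReal.tsum_le_tsum fun j => ?_)
    exact enorm_le_iff_norm_le.2 (norm_prod_tmaA_mul_le hθ t j ω _)

theorem enorm_mul_sqrt_mul_add_sqrt_mul_le {a s c x y : ℝ} (ha : |a| ≤ 1) (hsc : s ≤ c) :
    ‖a * √s * x + √s * y‖ₑ ≤ ‖√c‖ₑ * (‖x‖ₑ + ‖y‖ₑ) := by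
  have hs : ‖√s‖ₑ ≤ ‖√c‖ₑ := by
    rw [enorm_le_iff_norm_le, Real.norm_of_nonneg (Real.sqrt_nonneg _),
      Real.norm_of_nonneg (Real.sqrt_nonneg _)]
    exact Real.sqrt_le_sqrt hsc
  have ha' : ‖a‖ₑ ≤ 1 := by rwa [Real.enorm_eq_ofReal_abs, ENNReal.ofReal_le_one]
  calc ‖a * √s * x + √s * y‖ₑ ≤ ‖a‖ₑ * ‖√s‖ₑ * ‖x‖ₑ + ‖√s‖ₑ * ‖y‖ₑ := by
        simpa only [enorm_mul] using enorm_add_le (a * √s * x) (√s * y)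
    _ ≤ 1 * ‖√c‖ₑ * ‖x‖ₑ + ‖√c‖ₑ * ‖y‖ₑ := by gcongr
    _ = ‖√c‖ₑ * (‖x‖ₑ + ‖y‖ₑ) := by ring

theorem ae_enorm_le_of_tma_model [MeasurableSpace Ω] {P : Measure Ω} {φ₀ ξ₀ s₀ : ℝ}
    (hc₁ : c₁ < 1) (hθ₀ : (φ₀, ξ₀, s₀) ∈ tmaTheta c₁ c₂ c₃) {e : ℤ → Ω → ℝ}
    (hmodel : ∀ᵐ ω ∂P, ∀ t : ℤ, X t ω =
      (φ₀ + ξ₀ * (if X (t - 1) ω ≤ u then 1 else 0)) * Real.sqrt s₀ * e (t - 1) ω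
        + Real.sqrt s₀ * e t ω) :
    ∀ᵐ ω ∂P, ∀ t : ℤ, ‖X t ω‖ₑ ≤ ‖√c₃‖ₑ * (‖e (t - 1) ω‖ₑ + ‖e t ω‖ₑ) := by
  filter_upwards [hmodel] with ω hω t
  have hA := abs_tmaA_le (X := X) (u := u) hθ₀ (t - 1) ω
  rw [tmaA, abs_neg] at hA
  rw [hω t]
  exact enorm_mul_sqrt_mul_add_sqrt_mul_le (hA.trans hc₁.le) hθ₀.2.2.2

end TMA

theorem stmt5_general {Ω : Type*} [MeasurableSpace Ω] (P : Measure Ω)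
    (u c₁ c₂ c₃ : ℝ) (hc₁ : 0 < c₁) (hc₁' : c₁ < 1) (hc₂ : 0 < c₂)
    (φ₀ ξ₀ s₀ : ℝ) (hθ₀ : (φ₀, ξ₀, s₀) ∈ tmaTheta c₁ c₂ c₃)
    (e X : ℤ → Ω → ℝ) (he : ∀ t, Measurable (e t)) (hX : ∀ t, Measurable (X t))
    (heG : ∀ t, P.map (e t) = gaussianReal 0 1)
    (hmodel : ∀ᵐ ω ∂P, ∀ t : ℤ, X t ω =
      (φ₀ + ξ₀ * (if X (t - 1) ω ≤ u then 1 else 0)) * Real.sqrt s₀ * e (t - 1) ω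
        + Real.sqrt s₀ * e t ω) :
    (∀ᵐ ω ∂P, ∀ t : ℤ, ∀ θ ∈ tmaTheta c₁ c₂ c₃,
        Summable (fun j : ℕ =>
          |∏ i ∈ Finset.Icc 1 j, tmaA X u θ (t - (i : ℤ)) ω| * |X (t - j) ω|)) ∧
    (∀ d : ℝ, 1 ≤ d → ∀ t : ℤ,
        ∫⁻ ω, ⨆ θ ∈ tmaTheta c₁ c₂ c₃, ENNReal.ofReal (|tmaEps X u θ t ω| ^ d) ∂P < ⊤) := by
  set D : ℤ → Ω → ℝ≥0∞ := fun t ω => ∑' j : ℕ, ‖c₁ ^ j * X (t - j) ω‖ₑ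
  have hXe := ae_enorm_le_of_tma_model hc₁' hθ₀ hmodel
  have hD : ∀ d : ℝ, 1 ≤ d → ∀ t, ∫⁻ ω, D t ω ^ d ∂P < ⊤ := fun d hd t =>
    have hgauss := lintegral_enorm_rpow_gaussianReal_lt_top 0 1 (one_pos.trans_le hd)
    lintegral_rpow_tsum_enorm_geometric_mul_lt_top (fun _ => hX _)
      (abs_lt.2 ⟨by linarith, hc₁'⟩) hd (by finiteness) fun _ =>
        lintegral_enorm_rpow_le_of_le_add (he _) (he _) (heG _) (heG _)
          (hXe.mono fun _ h => h _) hd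
  constructor
  · have hDfin : ∀ᵐ ω ∂P, ∀ t, D t ω < ⊤ := ae_all_iff.2 fun t =>
      ae_lt_top' (by fun_prop) (by simpa using (hD 1 le_rfl t).ne)
    filter_upwards [hDfin] with ω hω t θ hθ
    refine (tsum_enorm_ne_top_iff_summable_norm.1 (hω t).ne).of_nonneg_of_le
      (fun j => by positivity) fun j => ?_
    rw [← abs_mul]
    exact norm_prod_tmaA_mul_le hθ t j ω _
  · intro d hd t
    calc ∫⁻ ω, ⨆ θ ∈ tmaTheta c₁ c₂ c₃, ENNReal.ofReal (|tmaEps X u θ t ω| ^ d) ∂P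
        ≤ ∫⁻ ω, ‖(√c₂)⁻¹‖ₑ ^ d * D t ω ^ d ∂P := by
          refine lintegral_mono fun ω => iSup₂_le fun θ hθ => ?_
          rw [← ENNReal.ofReal_rpow_of_nonneg (abs_nonneg _) (by linarith),
            ← Real.enorm_eq_ofReal_abs, ← ENNReal.mul_rpow_of_nonneg _ _ (by linarith)]
          gcongr
          exact enorm_tmaEps_le hc₂ hθ t ω
      _ < ⊤ := by
          rw [lintegral_const_mul' _ _ (by finiteness)]
          exact ENNReal.mul_lt_top (by finiteness) (hD d hd t)

/-- Lemma A.3, part 1: in the TMA(1) model with standard Gaussian innovations,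
almost surely the series defining `ε_t(θ)` converges absolutely for every `t` and
every `θ ∈ Θ`, and for every `d ≥ 1` and `t`, `E[sup_{θ∈Θ} |ε_t(θ)|^d] < ∞`. -/
theorem stmt5 {Ω : Type*} [MeasurableSpace Ω] (P : Measure Ω) [IsProbabilityMeasure P]
    (u c₁ c₂ c₃ : ℝ) (hc₁ : 0 < c₁) (hc₁' : c₁ < 1) (hc₂ : 0 < c₂) (hc₂₃ : c₂ ≤ c₃)
    (φ₀ ξ₀ s₀ : ℝ) (hθ₀ : (φ₀, ξ₀, s₀) ∈ tmaTheta c₁ c₂ c₃)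
    (e X : ℤ → Ω → ℝ) (he : ∀ t, Measurable (e t)) (hX : ∀ t, Measurable (X t))
    (heG : ∀ t, P.map (e t) = gaussianReal 0 1)
    (hmodel : ∀ᵐ ω ∂P, ∀ t : ℤ, X t ω =
      (φ₀ + ξ₀ * (if X (t - 1) ω ≤ u then 1 else 0)) * Real.sqrt s₀ * e (t - 1) ω
        + Real.sqrt s₀ * e t ω) :
    (∀ᵐ ω ∂P, ∀ t : ℤ, ∀ θ ∈ tmaTheta c₁ c₂ c₃,
        Summable (fun j : ℕ =>
          |∏ i ∈ Finset.Icc 1 j, tmaA X u θ (t - (i : ℤ)) ω| * |X (t - j) ω|)) ∧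
    (∀ d : ℝ, 1 ≤ d → ∀ t : ℤ,
        ∫⁻ ω, ⨆ θ ∈ tmaTheta c₁ c₂ c₃, ENNReal.ofReal (|tmaEps X u θ t ω| ^ d) ∂P < ⊤) :=
  stmt5_general P u c₁ c₂ c₃ hc₁ hc₁' hc₂ φ₀ ξ₀ s₀ hθ₀ e X he hX heG hmodel
end

section
/- Lemma on moments of the derivative series of the inverted errors (Lemma A.3 of the paper, derivative part): In the TMA(1) setup, define for θ ∈ Θ the series D_t(θ) = -σ^{-1} Σ_{j=1}^∞ Σ_{k=1}^{j} ( ∏_{i=1, i≠k}^{j} A_{t−i}(θ) ) X_{t−j} (the partial derivative ∂ε_t/∂φ). Then almost surely the defining double series converges absolutely for every t and θ ∈ Θ, and for every real d ≥ 1 and every t ∈ ℤ, E[ sup_{θ∈Θ} |D_t(θ)|^d ] < ∞. -/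
open MeasureTheory ProbabilityTheory Filter
open scoped ENNReal NNReal


/-- Derivative series `D_t(θ) = ∂ε_t/∂φ(θ)
= -σ⁻¹ Σ_{j≥1} Σ_{k=1}^j (∏_{i=1,i≠k}^j A_{t−i}(θ)) X_{t−j}` (the `j = 0` inner sum is empty). -/
noncomputable def tmaD {Ω : Type*} (X : ℤ → Ω → ℝ) (u : ℝ) (θ : ℝ × ℝ × ℝ)
    (t : ℤ) (ω : Ω) : ℝ :=
  -(Real.sqrt θ.2.2)⁻¹ *
    ∑' j : ℕ, ∑ k ∈ Finset.Icc 1 j,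
      (∏ i ∈ (Finset.Icc 1 j).erase k, tmaA X u θ (t - (i : ℤ)) ω) * X (t - j) ω

private lemma tsum_jensen (v z : ℕ → ℝ≥0∞) (hv : ∑' j, v j = 1) {p : ℝ} (hp : 1 ≤ p) :
    (∑' j, v j * z j) ^ p ≤ ∑' j, v j * z j ^ p := by
  have hp0 : (0:ℝ) < p := lt_of_lt_of_le one_pos hp
  have key : ∀ n : ℕ, (∑ j ∈ Finset.range n, v j * z j) ^ p ≤ ∑' j, v j * z j ^ p := by
    intro n
    set c : ℝ≥0∞ := ∑ j ∈ Finset.range n, v j with hc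
    have hc1 : c ≤ 1 := hv ▸ ENNReal.sum_le_tsum (Finset.range n)
    set w : ℕ → ℝ≥0∞ := fun j => if j = n then 1 - c else v j with hw
    set z' : ℕ → ℝ≥0∞ := fun j => if j = n then 0 else z j with hz'
    have hnmem : n ∉ Finset.range n := by simp
    have hwsum : ∑ j ∈ insert n (Finset.range n), w j = 1 := by
      rw [Finset.sum_insert hnmem]
      have h1 : ∑ j ∈ Finset.range n, w j = c := by
        refine Finset.sum_congr rfl fun j hj => ?_
        simp [hw, (Finset.mem_range.mp hj).ne]
      rw [h1]
      simp only [hw, if_pos rfl]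
      exact tsub_add_cancel_of_le hc1
    have hJ := ENNReal.rpow_arith_mean_le_arith_mean_rpow (insert n (Finset.range n)) w z' hwsum hp
    have hL : ∑ j ∈ insert n (Finset.range n), w j * z' j = ∑ j ∈ Finset.range n, v j * z j := by
      rw [Finset.sum_insert hnmem]
      simp only [hz', if_pos rfl, mul_zero, zero_add]
      refine Finset.sum_congr rfl fun j hj => ?_
      simp [hw, hz', (Finset.mem_range.mp hj).ne]
    have hR : ∑ j ∈ insert n (Finset.range n), w j * z' j ^ p = ∑ j ∈ Finset.range n, v j * z j ^ p := by
      rw [Finset.sum_insert hnmem]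
      simp only [hz', if_pos rfl, ENNReal.zero_rpow_of_pos hp0, mul_zero, zero_add]
      refine Finset.sum_congr rfl fun j hj => ?_
      simp [hw, hz', (Finset.mem_range.mp hj).ne]
    rw [hL, hR] at hJ
    exact hJ.trans (ENNReal.sum_le_tsum _)
  have htend : Tendsto (fun n : ℕ => (∑ j ∈ Finset.range n, v j * z j) ^ p) atTop
      (nhds ((∑' j, v j * z j) ^ p)) :=
    (ENNReal.continuous_rpow_const.tendsto _).comp (ENNReal.tendsto_nat_tsum _)
  exact le_of_tendsto htend (Filter.Eventually.of_forall key)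

private lemma gaussian_moment {d : ℝ} (hd : 0 ≤ d) (hd' : (-1:ℝ) < d) :
    ∫⁻ x, (ENNReal.ofReal |x|) ^ d ∂(gaussianReal 0 1) < ⊤ := by
  have hmeas : Measurable fun x : ℝ => (ENNReal.ofReal |x|) ^ d :=
    ENNReal.continuous_rpow_const.measurable.comp (measurable_abs.ennreal_ofReal)
  rw [gaussianReal_of_var_ne_zero 0 one_ne_zero,
    lintegral_withDensity_eq_lintegral_mul _ (measurable_gaussianPDF 0 1) hmeas]
  have habsint : Integrable fun x : ℝ => |x| ^ d * Real.exp (-(1/2) * x ^ 2) := by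
    have hIoi : IntegrableOn (fun x : ℝ => |x| ^ d * Real.exp (-(1/2 : ℝ) * x ^ 2)) (Set.Ioi 0) := by
      refine (integrableOn_rpow_mul_exp_neg_mul_sq (by norm_num : (0:ℝ) < 1/2) hd').congr_fun
        (fun x hx => ?_) measurableSet_Ioi
      rw [abs_of_pos hx]
    rw [← integrableOn_univ, ← @Set.Iio_union_Ici _ _ (0 : ℝ), integrableOn_union,
      integrableOn_Ici_iff_integrableOn_Ioi]
    refine ⟨?_, hIoi⟩
    rw [← (Measure.measurePreserving_neg (volume : Measure ℝ)).integrableOn_comp_preimage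
        (Homeomorph.neg ℝ).measurableEmbedding]
    simpa only [Function.comp_def, neg_sq, Set.neg_preimage, Set.neg_Iio, neg_neg, neg_zero,
      abs_neg] using hIoi
  have hint : Integrable (fun x : ℝ => gaussianPDFReal 0 1 x * |x| ^ d) := by
    have h := habsint.const_mul (Real.sqrt (2 * Real.pi))⁻¹
    refine h.congr (Filter.Eventually.of_forall fun x => ?_)
    simp only [gaussianPDFReal, NNReal.coe_one, mul_one, sub_zero]
    rw [show -(1/2 : ℝ) * x ^ 2 = -x ^ 2 / 2 by ring]
    ring
  calc ∫⁻ x, (gaussianPDF 0 1 * fun x => (ENNReal.ofReal |x|) ^ d) x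
      = ∫⁻ x, ENNReal.ofReal (gaussianPDFReal 0 1 x * |x| ^ d) := by
        congr 1
        funext x
        rw [Pi.mul_apply, gaussianPDF, ENNReal.ofReal_rpow_of_nonneg (abs_nonneg x) hd,
          ENNReal.ofReal_mul (gaussianPDFReal_nonneg _ _ _)]
    _ < ⊤ := hint.lintegral_lt_top

/-- Lemma A.3, derivative part: in the TMA(1) model with standard Gaussian innovations,
almost surely the double series defining `D_t(θ) = ∂ε_t/∂φ(θ)` converges absolutely for
every `t` and every `θ ∈ Θ`, and for every `d ≥ 1` and `t`,
`E[sup_{θ∈Θ} |D_t(θ)|^d] < ∞`. -/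
theorem stmt6 {Ω : Type*} [MeasurableSpace Ω] (P : Measure Ω) [IsProbabilityMeasure P]
    (u c₁ c₂ c₃ : ℝ) (hc₁ : 0 < c₁) (hc₁' : c₁ < 1) (hc₂ : 0 < c₂) (hc₂₃ : c₂ ≤ c₃)
    (φ₀ ξ₀ s₀ : ℝ) (hθ₀ : (φ₀, ξ₀, s₀) ∈ tmaTheta c₁ c₂ c₃)
    (e X : ℤ → Ω → ℝ) (he : ∀ t, Measurable (e t)) (hX : ∀ t, Measurable (X t))
    (heG : ∀ t, P.map (e t) = gaussianReal 0 1)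
    (hmodel : ∀ᵐ ω ∂P, ∀ t : ℤ, X t ω =
      (φ₀ + ξ₀ * (if X (t - 1) ω ≤ u then 1 else 0)) * Real.sqrt s₀ * e (t - 1) ω
        + Real.sqrt s₀ * e t ω) :
    (∀ᵐ ω ∂P, ∀ t : ℤ, ∀ θ ∈ tmaTheta c₁ c₂ c₃,
        Summable (fun j : ℕ => ∑ k ∈ Finset.Icc 1 j,
          |(∏ i ∈ (Finset.Icc 1 j).erase k, tmaA X u θ (t - (i : ℤ)) ω) * X (t - j) ω|)) ∧
    (∀ d : ℝ, 1 ≤ d → ∀ t : ℤ,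
        ∫⁻ ω, ⨆ θ ∈ tmaTheta c₁ c₂ c₃, ENNReal.ofReal (|tmaD X u θ t ω| ^ d) ∂P < ⊤) := by
  obtain ⟨hφ₀', hφξ₀', hs₀l', hs₀u'⟩ := hθ₀
  have hφ₀ : |φ₀| ≤ c₁ := hφ₀'
  have hφξ₀ : |φ₀ + ξ₀| ≤ c₁ := hφξ₀'
  have hs₀u : s₀ ≤ c₃ := hs₀u'
  set ρ : ℝ := (1 + c₁) / 2 with hρdef
  have hc₁ρ : c₁ < ρ := by rw [hρdef]; linarith
  have hρ1 : ρ < 1 := by rw [hρdef]; linarith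
  have hρ0 : 0 < ρ := by rw [hρdef]; linarith
  set K : ℝ := (ρ - c₁)⁻¹ with hKdef
  have hK0 : 0 < K := inv_pos.mpr (by linarith)
  -- geometric domination of `j * c₁ ^ (j-1)`
  have hgeom : ∀ j : ℕ, (j : ℝ) * c₁ ^ (j - 1) ≤ K * ρ ^ j := by
    intro j
    cases j with
    | zero => simp only [Nat.cast_zero, zero_mul, pow_zero, mul_one]; exact hK0.le
    | succ n =>
      have hy : (1 : ℝ) < ρ / c₁ := (one_lt_div hc₁).mpr hc₁ρ
      have hber : ((n : ℝ) + 1) * (ρ / c₁ - 1) ≤ (ρ / c₁) ^ (n + 1) := by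
        have h := one_add_mul_le_pow (a := ρ / c₁ - 1) (by linarith) (n + 1)
        have h2 : (1 : ℝ) + (ρ / c₁ - 1) = ρ / c₁ := by ring
        rw [h2] at h
        push_cast at h ⊢
        linarith
      have hmul : ((n : ℝ) + 1) * (ρ / c₁ - 1) * c₁ ^ (n + 1) ≤
          (ρ / c₁) ^ (n + 1) * c₁ ^ (n + 1) :=
        mul_le_mul_of_nonneg_right hber (pow_nonneg hc₁.le _)
      have hre : (ρ / c₁) ^ (n + 1) * c₁ ^ (n + 1) = ρ ^ (n + 1) := by
        rw [div_pow, div_mul_cancel₀]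
        exact pow_ne_zero _ (ne_of_gt hc₁)
      have hre2 : ((n : ℝ) + 1) * (ρ / c₁ - 1) * c₁ ^ (n + 1) =
          ((n : ℝ) + 1) * c₁ ^ n * (ρ - c₁) := by
        field_simp
        ring
      rw [hre, hre2] at hmul
      have hgoal : ((n : ℝ) + 1) * c₁ ^ n ≤ K * ρ ^ (n + 1) := by
        rw [hKdef, inv_mul_eq_div, le_div_iff₀ (by linarith : (0:ℝ) < ρ - c₁)]
        exact hmul
      simpa [Nat.succ_sub_one] using hgoal
  -- deterministic per-`j` bound on the inner sum
  have hterm : ∀ (ω : Ω), ∀ θ ∈ tmaTheta c₁ c₂ c₃, ∀ (t : ℤ) (j : ℕ),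
      ∑ k ∈ Finset.Icc 1 j,
          |(∏ i ∈ (Finset.Icc 1 j).erase k, tmaA X u θ (t - (i : ℤ)) ω) * X (t - j) ω|
        ≤ K * (ρ ^ j * |X (t - j) ω|) := by
    intro ω θ hθ t j
    obtain ⟨h1, h2, -, -⟩ := hθ
    have hA : ∀ s : ℤ, |tmaA X u θ s ω| ≤ c₁ := by
      intro s
      rw [tmaA, abs_neg]
      split_ifs with h
      · simpa using h2
      · simpa using h1
    have hsum : ∑ k ∈ Finset.Icc 1 j,
        |(∏ i ∈ (Finset.Icc 1 j).erase k, tmaA X u θ (t - (i : ℤ)) ω) * X (t - j) ω|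
        ≤ ∑ k ∈ Finset.Icc 1 j, c₁ ^ (j - 1) * |X (t - j) ω| := by
      refine Finset.sum_le_sum fun k hk => ?_
      rw [abs_mul]
      refine mul_le_mul_of_nonneg_right ?_ (abs_nonneg _)
      rw [Finset.abs_prod]
      have hcard : ((Finset.Icc 1 j).erase k).card = j - 1 := by
        rw [Finset.card_erase_of_mem hk, Nat.card_Icc]
        simp
      calc ∏ i ∈ (Finset.Icc 1 j).erase k, |tmaA X u θ (t - (i : ℤ)) ω|
          ≤ ∏ _i ∈ (Finset.Icc 1 j).erase k, c₁ :=
            Finset.prod_le_prod (fun i _ => abs_nonneg _) (fun i _ => hA _)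
        _ = c₁ ^ (j - 1) := by rw [Finset.prod_const, hcard]
    refine hsum.trans ?_
    rw [Finset.sum_const, Nat.card_Icc, nsmul_eq_mul]
    have : ((j + 1 - 1 : ℕ) : ℝ) = (j : ℝ) := by simp
    rw [this, ← mul_assoc]
    calc (j : ℝ) * c₁ ^ (j - 1) * |X (t - j) ω|
        ≤ K * ρ ^ j * |X (t - j) ω| :=
          mul_le_mul_of_nonneg_right (hgeom j) (abs_nonneg _)
      _ = K * (ρ ^ j * |X (t - j) ω|) := by ring
  -- a.e. bound on |X|
  have hXb : ∀ᵐ ω ∂P, ∀ s : ℤ,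
      |X s ω| ≤ Real.sqrt c₃ * (|e (s - 1) ω| + |e s ω|) := by
    filter_upwards [hmodel] with ω hω s
    have hci : |φ₀ + ξ₀ * (if X (s - 1) ω ≤ u then 1 else 0)| ≤ 1 := by
      split_ifs with h
      · simpa using hφξ₀.trans hc₁'.le
      · simpa using hφ₀.trans hc₁'.le
    have hsq : Real.sqrt s₀ ≤ Real.sqrt c₃ := Real.sqrt_le_sqrt hs₀u
    rw [hω s]
    calc |(φ₀ + ξ₀ * (if X (s - 1) ω ≤ u then 1 else 0)) * Real.sqrt s₀ * e (s - 1) ω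
          + Real.sqrt s₀ * e s ω|
        ≤ |(φ₀ + ξ₀ * (if X (s - 1) ω ≤ u then 1 else 0)) * Real.sqrt s₀ * e (s - 1) ω|
          + |Real.sqrt s₀ * e s ω| := abs_add_le _ _
      _ = |φ₀ + ξ₀ * (if X (s - 1) ω ≤ u then 1 else 0)| * Real.sqrt s₀ * |e (s - 1) ω|
          + Real.sqrt s₀ * |e s ω| := by
            rw [abs_mul, abs_mul, abs_mul, abs_of_nonneg (Real.sqrt_nonneg _)]
      _ ≤ 1 * Real.sqrt c₃ * |e (s - 1) ω| + Real.sqrt c₃ * |e s ω| := by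
            have g1 : |φ₀ + ξ₀ * (if X (s - 1) ω ≤ u then 1 else 0)| * Real.sqrt s₀ * |e (s - 1) ω|
                ≤ 1 * Real.sqrt c₃ * |e (s - 1) ω| :=
              mul_le_mul_of_nonneg_right
                (mul_le_mul hci hsq (Real.sqrt_nonneg _) one_pos.le) (abs_nonneg _)
            have g2 : Real.sqrt s₀ * |e s ω| ≤ Real.sqrt c₃ * |e s ω| :=
              mul_le_mul_of_nonneg_right hsq (abs_nonneg _)
            exact add_le_add g1 g2
      _ = Real.sqrt c₃ * (|e (s - 1) ω| + |e s ω|) := by ring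
  -- moments of X are uniformly bounded
  have measE : ∀ (d : ℝ) (s : ℤ), Measurable fun ω => (ENNReal.ofReal |e s ω|) ^ d := by
    intro d s
    exact ENNReal.continuous_rpow_const.measurable.comp ((he s).abs.ennreal_ofReal)
  have hEd : ∀ (d : ℝ) (s : ℤ),
      ∫⁻ ω, (ENNReal.ofReal |e s ω|) ^ d ∂P
        = ∫⁻ x, (ENNReal.ofReal |x|) ^ d ∂(gaussianReal 0 1) := by
    intro d s
    have hm : Measurable fun x : ℝ => (ENNReal.ofReal |x|) ^ d :=
      ENNReal.continuous_rpow_const.measurable.comp measurable_abs.ennreal_ofReal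
    rw [← heG s, lintegral_map hm (he s)]
  have hXd : ∀ d : ℝ, 1 ≤ d → ∃ Kd : ℝ≥0∞, Kd < ⊤ ∧ ∀ s : ℤ,
      ∫⁻ ω, (ENNReal.ofReal |X s ω|) ^ d ∂P ≤ Kd := by
    intro d hd
    have hd0 : (0 : ℝ) ≤ d := by linarith
    set G : ℝ≥0∞ := ∫⁻ x, (ENNReal.ofReal |x|) ^ d ∂(gaussianReal 0 1) with hGdef
    have hG : G < ⊤ := gaussian_moment hd0 (by linarith)
    set b : ℝ≥0∞ := ENNReal.ofReal (Real.sqrt c₃) with hbdef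
    refine ⟨b ^ d * 2 ^ d * (G + G), ?_, ?_⟩
    · refine ENNReal.mul_lt_top (ENNReal.mul_lt_top ?_ ?_) (ENNReal.add_lt_top.mpr ⟨hG, hG⟩)
      · exact ENNReal.rpow_lt_top_of_nonneg hd0 ENNReal.ofReal_ne_top
      · exact ENNReal.rpow_lt_top_of_nonneg hd0 (by norm_num)
    · intro s
      have step1 : ∀ᵐ ω ∂P, (ENNReal.ofReal |X s ω|) ^ d ≤
          b ^ d * 2 ^ d * ((ENNReal.ofReal |e (s - 1) ω|) ^ d + (ENNReal.ofReal |e s ω|) ^ d) := by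
        filter_upwards [hXb] with ω hω
        set E1 : ℝ≥0∞ := ENNReal.ofReal |e (s - 1) ω|
        set E2 : ℝ≥0∞ := ENNReal.ofReal |e s ω|
        have h1 : ENNReal.ofReal |X s ω| ≤ b * (E1 + E2) := by
          rw [hbdef, ← ENNReal.ofReal_add (abs_nonneg _) (abs_nonneg _),
            ← ENNReal.ofReal_mul (Real.sqrt_nonneg _)]
          exact ENNReal.ofReal_le_ofReal (hω s)
        have h2 : (E1 + E2) ^ d ≤ 2 ^ d * (E1 ^ d + E2 ^ d) := by
          have hsum : E1 + E2 ≤ 2 * (E1 ⊔ E2) := by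
            rw [two_mul]
            exact add_le_add le_sup_left le_sup_right
          calc (E1 + E2) ^ d ≤ (2 * (E1 ⊔ E2)) ^ d := ENNReal.rpow_le_rpow hsum hd0
            _ = 2 ^ d * (E1 ⊔ E2) ^ d := ENNReal.mul_rpow_of_nonneg _ _ hd0
            _ ≤ 2 ^ d * (E1 ^ d + E2 ^ d) := by
                refine mul_le_mul_right ?_ _
                rcases le_total E1 E2 with h | h
                · rw [sup_eq_right.mpr h]
                  exact le_add_self
                · rw [sup_eq_left.mpr h]
                  exact self_le_add_right _ _
        calc (ENNReal.ofReal |X s ω|) ^ d ≤ (b * (E1 + E2)) ^ d :=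
              ENNReal.rpow_le_rpow h1 hd0
          _ = b ^ d * (E1 + E2) ^ d := ENNReal.mul_rpow_of_nonneg _ _ hd0
          _ ≤ b ^ d * (2 ^ d * (E1 ^ d + E2 ^ d)) := mul_le_mul_right h2 _
          _ = b ^ d * 2 ^ d * (E1 ^ d + E2 ^ d) := by rw [mul_assoc]
      calc ∫⁻ ω, (ENNReal.ofReal |X s ω|) ^ d ∂P
          ≤ ∫⁻ ω, b ^ d * 2 ^ d *
              ((ENNReal.ofReal |e (s - 1) ω|) ^ d + (ENNReal.ofReal |e s ω|) ^ d) ∂P :=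
            lintegral_mono_ae step1
        _ = b ^ d * 2 ^ d * ∫⁻ ω,
              ((ENNReal.ofReal |e (s - 1) ω|) ^ d + (ENNReal.ofReal |e s ω|) ^ d) ∂P := by
            rw [lintegral_const_mul' _ _
              (ENNReal.mul_ne_top (ENNReal.rpow_ne_top_of_nonneg hd0 ENNReal.ofReal_ne_top)
                (ENNReal.rpow_ne_top_of_nonneg hd0 (by norm_num)))]
        _ = b ^ d * 2 ^ d * (G + G) := by
            rw [lintegral_add_left (measE d (s - 1)), hEd d (s - 1), hEd d s]
  -- a.s. summability of the geometric majorant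
  have hsumX : ∀ᵐ ω ∂P, ∀ t : ℤ, Summable fun j : ℕ => ρ ^ j * |X (t - j) ω| := by
    rw [ae_all_iff]
    intro t
    obtain ⟨K₁, hK₁, hK₁b⟩ := hXd 1 le_rfl
    simp only [ENNReal.rpow_one] at hK₁b
    set F : ℕ → Ω → ℝ≥0∞ := fun j ω => ENNReal.ofReal (ρ ^ j * |X (t - j) ω|) with hFdef
    have hFmeas : ∀ j, Measurable (F j) := fun j =>
      (((hX (t - j)).abs).const_mul _).ennreal_ofReal
    have hgeo : ∑' j : ℕ, ENNReal.ofReal (ρ ^ j) = ENNReal.ofReal ((1 - ρ)⁻¹) := by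
      rw [← ENNReal.ofReal_tsum_of_nonneg (fun j => pow_nonneg hρ0.le j)
        (summable_geometric_of_lt_one hρ0.le hρ1), tsum_geometric_of_lt_one hρ0.le hρ1]
    have hlt : ∫⁻ ω, ∑' j, F j ω ∂P < ⊤ := by
      rw [lintegral_tsum fun j => (hFmeas j).aemeasurable]
      have hb : ∀ j : ℕ, ∫⁻ ω, F j ω ∂P ≤ ENNReal.ofReal (ρ ^ j) * K₁ := by
        intro j
        have hrw : ∀ ω, F j ω = ENNReal.ofReal (ρ ^ j) * ENNReal.ofReal |X (t - j) ω| :=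
          fun ω => ENNReal.ofReal_mul (pow_nonneg hρ0.le _)
        simp_rw [hrw]
        rw [lintegral_const_mul' _ _ ENNReal.ofReal_ne_top]
        exact mul_le_mul_right (hK₁b _) _
      calc ∑' j, ∫⁻ ω, F j ω ∂P ≤ ∑' j : ℕ, ENNReal.ofReal (ρ ^ j) * K₁ :=
            ENNReal.tsum_le_tsum hb
        _ = (∑' j : ℕ, ENNReal.ofReal (ρ ^ j)) * K₁ := ENNReal.tsum_mul_right
        _ < ⊤ := by
            rw [hgeo]
            exact ENNReal.mul_lt_top ENNReal.ofReal_lt_top hK₁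
    filter_upwards [ae_lt_top (Measurable.ennreal_tsum hFmeas) hlt.ne] with ω hω
    have hsum := ENNReal.summable_toReal hω.ne
    refine hsum.congr fun j => ?_
    rw [hFdef]
    exact ENNReal.toReal_ofReal (by positivity)
  refine ⟨?_, ?_⟩
  · -- part 1
    filter_upwards [hsumX] with ω hω t θ hθ
    have hmaj : Summable fun j : ℕ => K * (ρ ^ j * |X (t - j) ω|) := (hω t).mul_left K
    exact hmaj.of_nonneg_of_le
      (fun j => Finset.sum_nonneg fun k _ => abs_nonneg _) (fun j => hterm ω θ hθ t j)
  · -- part 2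
    intro d hd t
    have hd0 : (0 : ℝ) ≤ d := by linarith
    obtain ⟨Kd, hKdlt, hKdb⟩ := hXd d hd
    set q : ℕ → ℝ≥0∞ := fun j => ENNReal.ofReal ((1 - ρ) * ρ ^ j) with hqdef
    set Z : ℕ → Ω → ℝ≥0∞ := fun j ω => ENNReal.ofReal |X (t - j) ω| with hZdef
    set c' : ℝ≥0∞ := ENNReal.ofReal ((Real.sqrt c₂)⁻¹ * K) * (ENNReal.ofReal (1 - ρ))⁻¹
      with hc'def
    have h1ρ : (0 : ℝ) < 1 - ρ := by linarith
    have hc'ne : c' ≠ ⊤ := by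
      rw [hc'def]
      exact ENNReal.mul_ne_top ENNReal.ofReal_ne_top
        (ENNReal.inv_ne_top.mpr (ENNReal.ofReal_pos.mpr h1ρ).ne')
    have hq1 : ∑' j, q j = 1 := by
      have hgs : Summable fun j : ℕ => ρ ^ j := summable_geometric_of_lt_one hρ0.le hρ1
      have h1 : ∑' j, q j = ENNReal.ofReal ((1 - ρ) * ∑' j : ℕ, ρ ^ j) := by
        rw [hqdef, ← ENNReal.ofReal_tsum_of_nonneg
          (fun j => mul_nonneg h1ρ.le (pow_nonneg hρ0.le _)) (hgs.mul_left _), tsum_mul_left]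
      rw [h1, tsum_geometric_of_lt_one hρ0.le hρ1, mul_inv_cancel₀ (ne_of_gt h1ρ)]
      simp
    -- a.e. pointwise bound on the supremum
    have hptw : ∀ᵐ ω ∂P, (⨆ θ ∈ tmaTheta c₁ c₂ c₃, ENNReal.ofReal (|tmaD X u θ t ω| ^ d))
        ≤ (c' * ∑' j, q j * Z j ω) ^ d := by
      filter_upwards [hsumX] with ω hω
      refine iSup₂_le fun θ hθ => ?_
      set S : ℝ := ∑' j : ℕ, ρ ^ j * |X (t - j) ω| with hSdef
      have hS : Summable fun j : ℕ => ρ ^ j * |X (t - j) ω| := hω t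
      have hmaj : Summable fun j : ℕ => K * (ρ ^ j * |X (t - j) ω|) := hS.mul_left K
      set T : ℕ → ℝ := fun j => ∑ k ∈ Finset.Icc 1 j,
        (∏ i ∈ (Finset.Icc 1 j).erase k, tmaA X u θ (t - (i : ℤ)) ω) * X (t - j) ω with hTdef
      have habsT : ∀ j, |T j| ≤ K * (ρ ^ j * |X (t - j) ω|) := fun j =>
        (Finset.abs_sum_le_sum_abs _ _).trans (hterm ω θ hθ t j)
      have hTabs : Summable fun j => |T j| :=
        hmaj.of_nonneg_of_le (fun j => abs_nonneg _) habsT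
      have hSnonneg : (0:ℝ) ≤ S := tsum_nonneg fun j => by positivity
      have hDb : |tmaD X u θ t ω| ≤ (Real.sqrt c₂)⁻¹ * (K * S) := by
        rw [tmaD, abs_mul, abs_neg, abs_of_nonneg (by positivity : (0:ℝ) ≤ (Real.sqrt θ.2.2)⁻¹)]
        have hσ : (Real.sqrt θ.2.2)⁻¹ ≤ (Real.sqrt c₂)⁻¹ :=
          inv_anti₀ (Real.sqrt_pos.mpr hc₂) (Real.sqrt_le_sqrt hθ.2.2.1)
        have htsum : |∑' j, T j| ≤ K * S := by
          calc |∑' j, T j| ≤ ∑' j, |T j| := by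
                simpa [Real.norm_eq_abs] using norm_tsum_le_tsum_norm (f := T) (by
                  simpa [Real.norm_eq_abs] using hTabs)
            _ ≤ ∑' j : ℕ, K * (ρ ^ j * |X (t - j) ω|) := Summable.tsum_le_tsum habsT hTabs hmaj
            _ = K * S := by rw [tsum_mul_left]
        exact mul_le_mul hσ htsum (abs_nonneg _) (by positivity)
      have hQZ : ∑' j, q j * Z j ω = ENNReal.ofReal ((1 - ρ) * S) := by
        have hqz : ∀ j : ℕ, q j * Z j ω = ENNReal.ofReal ((1 - ρ) * (ρ ^ j * |X (t - j) ω|)) := by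
          intro j
          rw [hqdef, hZdef]
          rw [← ENNReal.ofReal_mul (by positivity), mul_assoc]
        simp_rw [hqz]
        rw [← ENNReal.ofReal_tsum_of_nonneg (fun j => by positivity) (hS.mul_left _),
          tsum_mul_left]
      have hcQZ : ENNReal.ofReal ((Real.sqrt c₂)⁻¹ * (K * S)) = c' * ∑' j, q j * Z j ω := by
        have hinv : (ENNReal.ofReal (1 - ρ))⁻¹ * ENNReal.ofReal (1 - ρ) = 1 :=
          ENNReal.inv_mul_cancel (ENNReal.ofReal_pos.mpr h1ρ).ne'
            ENNReal.ofReal_ne_top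
        rw [hQZ, ENNReal.ofReal_mul h1ρ.le]
        calc ENNReal.ofReal ((Real.sqrt c₂)⁻¹ * (K * S))
            = ENNReal.ofReal ((Real.sqrt c₂)⁻¹ * K) * ENNReal.ofReal S := by
              rw [← ENNReal.ofReal_mul (by positivity), mul_assoc]
          _ = ENNReal.ofReal ((Real.sqrt c₂)⁻¹ * K) *
              (((ENNReal.ofReal (1 - ρ))⁻¹ * ENNReal.ofReal (1 - ρ)) * ENNReal.ofReal S) := by
              rw [hinv, one_mul]
          _ = c' * (ENNReal.ofReal (1 - ρ) * ENNReal.ofReal S) := by rw [hc'def]; ring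
      calc ENNReal.ofReal (|tmaD X u θ t ω| ^ d)
          = (ENNReal.ofReal |tmaD X u θ t ω|) ^ d :=
            (ENNReal.ofReal_rpow_of_nonneg (abs_nonneg _) hd0).symm
        _ ≤ (ENNReal.ofReal ((Real.sqrt c₂)⁻¹ * (K * S))) ^ d :=
            ENNReal.rpow_le_rpow (ENNReal.ofReal_le_ofReal hDb) hd0
        _ = (c' * ∑' j, q j * Z j ω) ^ d := by rw [hcQZ]
    have hmeasZ : ∀ j : ℕ, Measurable fun ω => q j * (Z j ω) ^ d := fun j =>
      (ENNReal.continuous_rpow_const.measurable.comp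
        ((hX (t - j)).abs.ennreal_ofReal)).const_mul _
    calc ∫⁻ ω, ⨆ θ ∈ tmaTheta c₁ c₂ c₃, ENNReal.ofReal (|tmaD X u θ t ω| ^ d) ∂P
        ≤ ∫⁻ ω, (c' * ∑' j, q j * Z j ω) ^ d ∂P := lintegral_mono_ae hptw
      _ = ∫⁻ ω, c' ^ d * (∑' j, q j * Z j ω) ^ d ∂P := by
          simp_rw [ENNReal.mul_rpow_of_nonneg _ _ hd0]
      _ = c' ^ d * ∫⁻ ω, (∑' j, q j * Z j ω) ^ d ∂P :=
          lintegral_const_mul' _ _ (ENNReal.rpow_ne_top_of_nonneg hd0 hc'ne)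
      _ ≤ c' ^ d * ∫⁻ ω, (∑' j, q j * (Z j ω) ^ d) ∂P := by
          refine mul_le_mul_right (lintegral_mono fun ω => ?_) _
          exact tsum_jensen q (fun j => Z j ω) hq1 hd
      _ = c' ^ d * ∑' j, ∫⁻ ω, q j * (Z j ω) ^ d ∂P := by
          rw [lintegral_tsum fun j => (hmeasZ j).aemeasurable]
      _ ≤ c' ^ d * ∑' j : ℕ, q j * Kd := by
          refine mul_le_mul_right (ENNReal.tsum_le_tsum fun j => ?_) _
          rw [lintegral_const_mul' _ _ ENNReal.ofReal_ne_top]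
          exact mul_le_mul_right (hKdb (t - j)) _
      _ = c' ^ d * ((∑' j, q j) * Kd) := by rw [ENNReal.tsum_mul_right]
      _ = c' ^ d * Kd := by rw [hq1, one_mul]
      _ < ⊤ := ENNReal.mul_lt_top (ENNReal.rpow_lt_top_of_nonneg hd0 hc'ne) hKdlt
end

section
/- Moments of derivatives of the GARCH quasi-log-likelihood (Lemma A.8 of the paper, conditional form): Assume that for every real d ≥ 1 and all coordinate indices i, j, the following expectations are finite: E[ sup_{θ∈N} (X²/S(θ))^d ], E[ sup_{θ∈N} |(∂S/∂θ_i)(θ)/S(θ)|^d ], and E[ sup_{θ∈N} |(∂²S/∂θ_i∂θ_j)(θ)/S(θ)|^d ]. Then for every real d ≥ 1 and all i, j, E[ sup_{θ∈N} |(∂l/∂θ_i)(θ)|^d ] < ∞ and E[ sup_{θ∈N} |(∂²l/∂θ_i∂θ_j)(θ)|^d ] < ∞. -/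
/-!
On `N` the first two derivatives of `l` are explicit:
with `q = X²/S`, `b = ∂ᵢS/S`, `c = ∂ⱼS/S`, `a = ∂ᵢ∂ⱼS/S`,
`∂ᵢl = ½(q - 1)b` and `∂ᵢ∂ⱼl = ½((q - 1)a - (2q - 1)bc)`, so that for `q ≥ 0`
`|∂ᵢl| ≤ (q + 1)|b|` and `|∂ᵢ∂ⱼl| ≤ (q + 1)(|b||c| + |a|)`.
Taking suprema over `N`, the suprema of the derivatives of `l` are dominated by polynomials in the
suprema of `q`, `|b|`, `|c|`, `|a|`. Nonnegative random variables with all moments finite are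
closed under sums (`(x + y)ᵈ ≤ 2ᵈ⁻¹(xᵈ + yᵈ)`) and products (`xy ≤ x² + y²`), as long as one
factor is measurable; the suprema over `N` are measurable because, by continuity in `θ`, they
are suprema over a countable dense subset of `N`.
-/

open MeasureTheory Topology Filter Set
open scoped ENNReal

theorem ENNReal.mul_le_sq_add_sq (a b : ℝ≥0∞) : a * b ≤ a ^ (2 : ℝ) + b ^ (2 : ℝ) := by
  rcases le_total a b with h | h
  · calc a * b ≤ b ^ (2 : ℝ) := by rw [ENNReal.rpow_two, sq]; gcongr
      _ ≤ _ := le_add_self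
  · calc a * b ≤ a ^ (2 : ℝ) := by rw [ENNReal.rpow_two, sq]; gcongr
      _ ≤ _ := le_self_add

section Moments

variable {Ω : Type*} [MeasurableSpace Ω] {P : Measure Ω} {F G : Ω → ℝ≥0∞}

def HasFiniteMoments (P : Measure Ω) (F : Ω → ℝ≥0∞) : Prop :=
  ∀ d : ℝ, 1 ≤ d → ∫⁻ ω, F ω ^ d ∂P < ⊤

theorem HasFiniteMoments.mono (hG : HasFiniteMoments P G) (h : F ≤ᵐ[P] G) :
    HasFiniteMoments P F := fun d hd =>
  (lintegral_mono_ae (h.mono fun _ hω => ENNReal.rpow_le_rpow hω (by linarith))).trans_lt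
    (hG d hd)

theorem hasFiniteMoments_const [IsFiniteMeasure P] {c : ℝ≥0∞} (hc : c ≠ ⊤) :
    HasFiniteMoments P fun _ => c := fun d hd => by
  rw [lintegral_const]
  exact ENNReal.mul_lt_top (ENNReal.rpow_lt_top_of_nonneg (by linarith) hc) (measure_lt_top _ _)

theorem HasFiniteMoments.add (hF : HasFiniteMoments P F) (hG : HasFiniteMoments P G)
    (hFm : AEMeasurable F P) : HasFiniteMoments P (F + G) := fun d hd => by
  have hc : (2 : ℝ≥0∞) ^ (d - 1) < ⊤ := ENNReal.rpow_lt_top_of_nonneg (by linarith) (by simp)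
  calc ∫⁻ ω, (F ω + G ω) ^ d ∂P ≤ ∫⁻ ω, 2 ^ (d - 1) * (F ω ^ d + G ω ^ d) ∂P :=
        lintegral_mono fun ω => ENNReal.rpow_add_le_mul_rpow_add_rpow _ _ hd
    _ = 2 ^ (d - 1) * (∫⁻ ω, F ω ^ d ∂P + ∫⁻ ω, G ω ^ d ∂P) := by
        rw [lintegral_const_mul' _ _ hc.ne, lintegral_add_left' (hFm.pow_const d)]
    _ < ⊤ := ENNReal.mul_lt_top hc (ENNReal.add_lt_top.2 ⟨hF d hd, hG d hd⟩)

theorem HasFiniteMoments.rpow (hF : HasFiniteMoments P F) {p : ℝ} (hp : 1 ≤ p) :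
    HasFiniteMoments P fun ω => F ω ^ p := fun d hd => by
  simpa only [← ENNReal.rpow_mul] using hF (p * d) (by nlinarith)

theorem HasFiniteMoments.mul (hF : HasFiniteMoments P F) (hG : HasFiniteMoments P G)
    (hFm : AEMeasurable F P) : HasFiniteMoments P (F * G) :=
  ((hF.rpow one_le_two).add (hG.rpow one_le_two) (hFm.pow_const _)).mono <|
    Eventually.of_forall fun ω => ENNReal.mul_le_sq_add_sq (F ω) (G ω)

theorem iSup₂_ofReal_rpow {ι : Type*} {s : Set ι} {f : ι → ℝ} (hf : ∀ i ∈ s, 0 ≤ f i) {d : ℝ}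
    (hd : 0 < d) :
    ⨆ i ∈ s, ENNReal.ofReal (f i ^ d) = (⨆ i ∈ s, ENNReal.ofReal (f i)) ^ d := by
  have h := map_iSup₂ (ENNReal.orderIsoRpow d hd) fun i (_ : i ∈ s) => ENNReal.ofReal (f i)
  simp only [ENNReal.orderIsoRpow_apply] at h
  rw [h]
  refine iSup_congr fun i => iSup_congr fun hi => ?_
  rw [ENNReal.ofReal_rpow_of_nonneg (hf i hi) hd.le]

theorem hasFiniteMoments_iSup₂_ofReal_iff {ι : Type*} {s : Set ι} {f : ι → Ω → ℝ}
    (hf : ∀ ω, ∀ i ∈ s, 0 ≤ f i ω) :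
    HasFiniteMoments P (fun ω => ⨆ i ∈ s, ENNReal.ofReal (f i ω)) ↔
      ∀ d : ℝ, 1 ≤ d → ∫⁻ ω, ⨆ i ∈ s, ENNReal.ofReal (f i ω ^ d) ∂P < ⊤ := by
  refine forall₂_congr fun d hd => ?_
  simp only [iSup₂_ofReal_rpow (hf _) (zero_lt_one.trans_le hd)]

theorem hasFiniteMoments_iSup₂_ofReal_abs_iff {ι : Type*} {s : Set ι} {f : ι → Ω → ℝ} :
    HasFiniteMoments P (fun ω => ⨆ i ∈ s, ENNReal.ofReal |f i ω|) ↔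
      ∀ d : ℝ, 1 ≤ d → ∫⁻ ω, ⨆ i ∈ s, ENNReal.ofReal (|f i ω| ^ d) ∂P < ⊤ :=
  hasFiniteMoments_iSup₂_ofReal_iff fun _ _ _ => abs_nonneg _

theorem measurable_biSup_of_continuousOn {E : Type*} [TopologicalSpace E]
    [TopologicalSpace.PseudoMetrizableSpace E] {s : Set E} (hs : TopologicalSpace.IsSeparable s)
    {f : E → Ω → ℝ≥0∞} (hmeas : ∀ θ ∈ s, Measurable (f θ))
    (hcont : ∀ ω, ContinuousOn (fun θ => f θ ω) s) :
    Measurable fun ω => ⨆ θ ∈ s, f θ ω := by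
  obtain ⟨t, hts, htc, hst⟩ := hs.exists_countable_dense_subset
  have hsup : ∀ ω, ⨆ θ ∈ s, f θ ω = ⨆ θ ∈ t, f θ ω := fun ω => by
    refine le_antisymm (iSup₂_le fun θ hθ => ?_) (biSup_mono hts)
    have hmaps : MapsTo (fun θ => f θ ω) t (Iic (⨆ θ ∈ t, f θ ω)) := fun θ hθ =>
      le_biSup (fun θ => f θ ω) hθ
    simpa only [closure_Iic, mem_Iic] using ((hcont ω θ hθ).mono hts).mem_closure (hst hθ) hmaps
  simp only [hsup]
  exact Measurable.biSup t htc fun θ hθ => hmeas θ (hts hθ)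

end Moments

theorem abs_half_mul_sub_one_mul_le {q b : ℝ} (hq : 0 ≤ q) :
    |1 / 2 * (q - 1) * b| ≤ (q + 1) * |b| := by
  have h : |q - 1| ≤ q + 1 := abs_le.2 ⟨by linarith, by linarith⟩
  rw [abs_mul, abs_mul, abs_of_pos (by norm_num : (0 : ℝ) < 1 / 2)]
  gcongr
  linarith

theorem abs_half_mul_sub_mul_sub_le {q a b c : ℝ} (hq : 0 ≤ q) :
    |1 / 2 * ((q - 1) * a - (2 * q - 1) * (b * c))| ≤ (q + 1) * (|b| * |c| + |a|) := by
  have h1 : |q - 1| ≤ 2 * (q + 1) := by rw [abs_le]; constructor <;> linarith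
  have h2 : |2 * q - 1| ≤ 2 * (q + 1) := by rw [abs_le]; constructor <;> linarith
  calc |1 / 2 * ((q - 1) * a - (2 * q - 1) * (b * c))|
      ≤ 1 / 2 * (|q - 1| * |a| + |2 * q - 1| * (|b| * |c|)) := by
        rw [abs_mul, abs_of_pos (by norm_num : (0 : ℝ) < 1 / 2), ← abs_mul (q - 1), ← abs_mul b,
          ← abs_mul (2 * q - 1)]
        gcongr
        exact abs_sub ((q - 1) * a) _
    _ ≤ 1 / 2 * (2 * (q + 1) * |a| + 2 * (q + 1) * (|b| * |c|)) := by gcongr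
    _ = (q + 1) * (|b| * |c| + |a|) := by ring

section QuasiLogLikelihood

variable {E : Type*} [NormedAddCommGroup E] [NormedSpace ℝ E] {s : E → ℝ} {U : Set E} {θ : E}
  {x : ℝ}

theorem fderiv_quasiLogLik_apply (hs : DifferentiableAt ℝ s θ) (hpos : 0 < s θ) (v : E) :
    fderiv ℝ (fun θ' => -(1 / 2) * (Real.log (s θ') + x / s θ')) θ v
      = 1 / 2 * (x / s θ - 1) * (fderiv ℝ s θ v / s θ) := by
  have hinv := (hasDerivAt_inv hpos.ne').comp_hasFDerivAt θ hs.hasFDerivAt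
  have h : HasFDerivAt (fun θ' => -(1 / 2) * (Real.log (s θ') + x / s θ')) _ θ :=
    ((hs.hasFDerivAt.log hpos.ne').add (hinv.const_mul x)).const_mul _
  rw [h.fderiv]
  simp only [FunLike.coe_smul, FunLike.coe_add, Pi.smul_apply,
    Pi.add_apply, smul_eq_mul]
  field_simp
  ring

theorem fderiv_score_apply {φ : E → ℝ} (hs : DifferentiableAt ℝ s θ)
    (hφ : DifferentiableAt ℝ φ θ) (hpos : 0 < s θ) (v : E) :
    fderiv ℝ (fun θ' => 1 / 2 * ((x / s θ' - 1) * (φ θ' / s θ'))) θ v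
      = 1 / 2 * ((x / s θ - 1) * (fderiv ℝ φ θ v / s θ)
          - (2 * (x / s θ) - 1) * (fderiv ℝ s θ v / s θ * (φ θ / s θ))) := by
  have hinv := (hasDerivAt_inv hpos.ne').comp_hasFDerivAt θ hs.hasFDerivAt
  have h : HasFDerivAt (fun θ' => 1 / 2 * ((x / s θ' - 1) * (φ θ' / s θ'))) _ θ :=
    (((hinv.const_mul x).sub_const 1).mul (hφ.hasFDerivAt.mul hinv)).const_mul _
  rw [h.fderiv]
  simp only [FunLike.coe_smul, FunLike.coe_add, Pi.smul_apply,
    Pi.add_apply, Pi.mul_apply, Function.comp_apply, smul_eq_mul]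
  field_simp
  ring

theorem fderiv_fderiv_quasiLogLik_apply (hU : IsOpen U) (hs : ContDiffOn ℝ 2 s U)
    (hpos : ∀ θ ∈ U, 0 < s θ) (hθ : θ ∈ U) (v w : E) :
    fderiv ℝ (fun θ' => fderiv ℝ (fun θ'' => -(1 / 2) * (Real.log (s θ'') + x / s θ'')) θ' w) θ v
      = 1 / 2 * ((x / s θ - 1) * (fderiv ℝ (fun θ' => fderiv ℝ s θ' w) θ v / s θ)
          - (2 * (x / s θ) - 1) * (fderiv ℝ s θ v / s θ * (fderiv ℝ s θ w / s θ))) := by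
  have hdiff : ∀ θ ∈ U, DifferentiableAt ℝ s θ := fun θ hθ =>
    (hs.differentiableOn (by norm_num)).differentiableAt (hU.mem_nhds hθ)
  have hscore : (fun θ' => fderiv ℝ (fun θ'' => -(1 / 2) * (Real.log (s θ'') + x / s θ'')) θ' w)
      =ᶠ[𝓝 θ] fun θ' => 1 / 2 * ((x / s θ' - 1) * (fderiv ℝ s θ' w / s θ')) := by
    filter_upwards [hU.mem_nhds hθ] with θ' hθ'
    rw [fderiv_quasiLogLik_apply (hdiff θ' hθ') (hpos θ' hθ'), mul_assoc]
  have hφ : DifferentiableAt ℝ (fun θ' => fderiv ℝ s θ' w) θ :=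
    (((hs.fderiv_of_isOpen hU (by norm_num)).differentiableOn one_ne_zero).differentiableAt
      (hU.mem_nhds hθ)).clm_apply (differentiableAt_const w)
  rw [hscore.fderiv_eq, fderiv_score_apply (hdiff θ hθ) hφ (hpos θ hθ)]

theorem iSup₂_ofReal_abs_fderiv_quasiLogLik_le (hU : IsOpen U) (hs : DifferentiableOn ℝ s U)
    (hpos : ∀ θ ∈ U, 0 < s θ) (hx : 0 ≤ x) (v : E) :
    ⨆ θ ∈ U, ENNReal.ofReal |fderiv ℝ (fun θ' => -(1 / 2) * (Real.log (s θ') + x / s θ')) θ v|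
      ≤ ((⨆ θ ∈ U, ENNReal.ofReal (x / s θ)) + 1) *
          ⨆ θ ∈ U, ENNReal.ofReal |fderiv ℝ s θ v / s θ| := by
  refine iSup₂_le fun θ hθ => ?_
  have hq : 0 ≤ x / s θ := div_nonneg hx (hpos θ hθ).le
  rw [fderiv_quasiLogLik_apply (hs.differentiableAt (hU.mem_nhds hθ)) (hpos θ hθ)]
  calc ENNReal.ofReal |1 / 2 * (x / s θ - 1) * (fderiv ℝ s θ v / s θ)|
      ≤ ENNReal.ofReal ((x / s θ + 1) * |fderiv ℝ s θ v / s θ|) :=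
        ENNReal.ofReal_le_ofReal (abs_half_mul_sub_one_mul_le hq)
    _ = (ENNReal.ofReal (x / s θ) + 1) * ENNReal.ofReal |fderiv ℝ s θ v / s θ| := by
        rw [ENNReal.ofReal_mul (by positivity), ENNReal.ofReal_add hq zero_le_one,
          ENNReal.ofReal_one]
    _ ≤ _ := by gcongr <;> exact le_iSup₂_of_le θ hθ le_rfl

theorem iSup₂_ofReal_abs_fderiv_fderiv_quasiLogLik_le (hU : IsOpen U) (hs : ContDiffOn ℝ 2 s U)
    (hpos : ∀ θ ∈ U, 0 < s θ) (hx : 0 ≤ x) (v w : E) :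
    ⨆ θ ∈ U, ENNReal.ofReal |fderiv ℝ (fun θ' =>
        fderiv ℝ (fun θ'' => -(1 / 2) * (Real.log (s θ'') + x / s θ'')) θ' w) θ v|
      ≤ ((⨆ θ ∈ U, ENNReal.ofReal (x / s θ)) + 1) *
          ((⨆ θ ∈ U, ENNReal.ofReal |fderiv ℝ s θ v / s θ|) *
              (⨆ θ ∈ U, ENNReal.ofReal |fderiv ℝ s θ w / s θ|) +
            ⨆ θ ∈ U, ENNReal.ofReal |fderiv ℝ (fun θ' => fderiv ℝ s θ' w) θ v / s θ|) := by
  refine iSup₂_le fun θ hθ => ?_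
  have hq : 0 ≤ x / s θ := div_nonneg hx (hpos θ hθ).le
  rw [fderiv_fderiv_quasiLogLik_apply hU hs hpos hθ]
  refine (ENNReal.ofReal_le_ofReal (abs_half_mul_sub_mul_sub_le hq)).trans ?_
  rw [ENNReal.ofReal_mul (by positivity), ENNReal.ofReal_add hq zero_le_one, ENNReal.ofReal_one,
    ENNReal.ofReal_add (by positivity) (abs_nonneg _), ENNReal.ofReal_mul (abs_nonneg _)]
  gcongr <;> exact le_iSup₂_of_le θ hθ le_rfl

end QuasiLogLikelihood

/-- Lemma A.8 (conditional form): moments of the derivatives of the GARCH Gaussian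
quasi-log-likelihood `l(θ) = -(1/2)(log S(θ) + X²/S(θ))`. If all moments
`E[sup_{θ∈N} (X²/S(θ))^d]`, `E[sup_{θ∈N} |∂ᵢS/S|^d]`, `E[sup_{θ∈N} |∂²ᵢⱼS/S|^d]` are
finite for every `d ≥ 1`, then so are `E[sup_{θ∈N} |∂ᵢl|^d]` and
`E[sup_{θ∈N} |∂²ᵢⱼl|^d]`. -/
theorem stmt10 {Ω : Type*} [MeasurableSpace Ω] (P : Measure Ω) [IsProbabilityMeasure P]
    {m : ℕ} (N : Set (Fin m → ℝ)) (hN : IsOpen N)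
    (X : Ω → ℝ) (hX : Measurable X)
    (S : (Fin m → ℝ) → Ω → ℝ)
    (hSsmooth : ∀ ω, ContDiffOn ℝ 2 (fun θ => S θ ω) N)
    (hSpos : ∀ ω, ∀ θ ∈ N, 0 < S θ ω)
    (hSmeas : ∀ θ, Measurable (S θ))
    (hSmeas' : ∀ (θ : Fin m → ℝ) (i : Fin m),
      Measurable (fun ω => fderiv ℝ (fun θ' => S θ' ω) θ (Pi.single i 1)))
    (h1 : ∀ d : ℝ, 1 ≤ d →
      ∫⁻ ω, ⨆ θ ∈ N, ENNReal.ofReal ((X ω ^ 2 / S θ ω) ^ d) ∂P < ⊤)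
    (h2 : ∀ d : ℝ, 1 ≤ d → ∀ i : Fin m,
      ∫⁻ ω, ⨆ θ ∈ N, ENNReal.ofReal
        (|fderiv ℝ (fun θ' => S θ' ω) θ (Pi.single i 1) / S θ ω| ^ d) ∂P < ⊤)
    (h3 : ∀ d : ℝ, 1 ≤ d → ∀ i j : Fin m,
      ∫⁻ ω, ⨆ θ ∈ N, ENNReal.ofReal
        (|fderiv ℝ (fun θ' => fderiv ℝ (fun θ'' => S θ'' ω) θ' (Pi.single j 1)) θ
            (Pi.single i 1) / S θ ω| ^ d) ∂P < ⊤) :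
    (∀ d : ℝ, 1 ≤ d → ∀ i : Fin m,
      ∫⁻ ω, ⨆ θ ∈ N, ENNReal.ofReal
        (|fderiv ℝ (fun θ' => -(1 / 2) * (Real.log (S θ' ω) + X ω ^ 2 / S θ' ω)) θ
            (Pi.single i 1)| ^ d) ∂P < ⊤) ∧
    (∀ d : ℝ, 1 ≤ d → ∀ i j : Fin m,
      ∫⁻ ω, ⨆ θ ∈ N, ENNReal.ofReal
        (|fderiv ℝ (fun θ' =>
            fderiv ℝ (fun θ'' => -(1 / 2) * (Real.log (S θ'' ω) + X ω ^ 2 / S θ'' ω)) θ'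
              (Pi.single j 1)) θ (Pi.single i 1)| ^ d) ∂P < ⊤) := by
  have hQ := (hasFiniteMoments_iSup₂_ofReal_iff fun ω θ hθ =>
    div_nonneg (sq_nonneg (X ω)) (hSpos ω θ hθ).le).2 h1
  have hB := fun i => hasFiniteMoments_iSup₂_ofReal_abs_iff.2 fun d hd => h2 d hd i
  have hA := fun i j => hasFiniteMoments_iSup₂_ofReal_abs_iff.2 fun d hd => h3 d hd i j
  have hQm : Measurable fun ω => ⨆ θ ∈ N, ENNReal.ofReal (X ω ^ 2 / S θ ω) :=
    measurable_biSup_of_continuousOn (.of_separableSpace N)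
      (fun θ _ => ENNReal.measurable_ofReal.comp ((hX.pow_const 2).div (hSmeas θ)))
      fun ω => ENNReal.continuous_ofReal.comp_continuousOn <|
        continuousOn_const.div (hSsmooth ω).continuousOn fun θ hθ => (hSpos ω θ hθ).ne'
  have hBm : ∀ i, Measurable fun ω =>
      ⨆ θ ∈ N, ENNReal.ofReal |fderiv ℝ (fun θ' => S θ' ω) θ (Pi.single i 1) / S θ ω| :=
    fun i => measurable_biSup_of_continuousOn (.of_separableSpace N)
      (fun θ _ => ENNReal.measurable_ofReal.comp ((hSmeas' θ i).div (hSmeas θ)).abs)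
      fun ω => ENNReal.continuous_ofReal.comp_continuousOn <|
        ((((hSsmooth ω).continuousOn_fderiv_of_isOpen hN (by norm_num)).clm_apply
          continuousOn_const).div (hSsmooth ω).continuousOn fun θ hθ => (hSpos ω θ hθ).ne').abs
  have hQ1 := hQ.add (hasFiniteMoments_const ENNReal.one_ne_top) hQm.aemeasurable
  have hQ1m := (hQm.add_const 1).aemeasurable (μ := P)
  refine ⟨fun d hd i => ?_, fun d hd i j => ?_⟩
  · refine hasFiniteMoments_iSup₂_ofReal_abs_iff.1 ?_ d hd
    refine (hQ1.mul (hB i) hQ1m).mono (Eventually.of_forall fun ω => ?_)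
    exact iSup₂_ofReal_abs_fderiv_quasiLogLik_le hN ((hSsmooth ω).differentiableOn (by norm_num))
      (hSpos ω) (sq_nonneg _) _
  · refine hasFiniteMoments_iSup₂_ofReal_abs_iff.1 ?_ d hd
    -- The product term comes first: `HasFiniteMoments.add` only needs its first summand measurable.
    refine (hQ1.mul (((hB i).mul (hB j) (hBm i).aemeasurable).add (hA i j)
      ((hBm i).mul (hBm j)).aemeasurable) hQ1m).mono (Eventually.of_forall fun ω => ?_)
    exact iSup₂_ofReal_abs_fderiv_fderiv_quasiLogLik_le hN (hSsmooth ω) (hSpos ω) (sq_nonneg _) _ _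
end

section
/- Deterministic score-approximation inequality for GARCH (inequality (temp-1) of the paper): For every w > 0 and K ≥ 0 there exists a constant C, depending only on K and w, with the following property. Let ρ ∈ (0,1), t ∈ ℕ, x ∈ ℝ, and let s, s̃, s', s̃' be real numbers with s ≥ w, s̃ ≥ w, |1/s − 1/s̃| ≤ K ρ^t / s, and |s' − s̃'| ≤ K ρ^t. Then | (1/2)(x²/s − 1)(s'/s) − (1/2)(x²/s̃ − 1)(s̃'/s̃) | ≤ C (1 + x²/s)(1 + |s'/s|) ρ^t. -/
/-- Deterministic score-approximation inequality for GARCH (inequality (temp-1)):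
for every `w > 0` and `K ≥ 0` there is a constant `C` (depending only on `K` and `w`)
such that whenever `ρ ∈ (0,1)`, the exact and truncated conditional variances
`s, sa ≥ w` satisfy `|1/s − 1/sa| ≤ K ρ^t / s`, and their parameter-derivatives
`ds, dsa` satisfy `|ds − dsa| ≤ K ρ^t`, one has
`|(1/2)(x²/s − 1)(ds/s) − (1/2)(x²/sa − 1)(dsa/sa)| ≤ C (1 + x²/s)(1 + |ds/s|) ρ^t`. -/
theorem stmt11 (w K : ℝ) (hw : 0 < w) (hK : 0 ≤ K) :
    ∃ C : ℝ, ∀ ρ : ℝ, ρ ∈ Set.Ioo (0 : ℝ) 1 → ∀ (t : ℕ) (x s sa ds dsa : ℝ),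
      w ≤ s → w ≤ sa →
      |1 / s - 1 / sa| ≤ K * ρ ^ t / s →
      |ds - dsa| ≤ K * ρ ^ t →
      |(1 / 2) * (x ^ 2 / s - 1) * (ds / s) - (1 / 2) * (x ^ 2 / sa - 1) * (dsa / sa)|
        ≤ C * (1 + x ^ 2 / s) * (1 + |ds / s|) * ρ ^ t := by
  refine ⟨K * (2 + K) / 2 + K * (1 + K) / (2 * w), ?_⟩
  rintro ρ ⟨hρ0, hρ1⟩ t x s sa ds dsa hs hsa h1 h2
  have hs0 : 0 < s := lt_of_lt_of_le hw hs
  have hsa0 : 0 < sa := lt_of_lt_of_le hw hsa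
  set r := ρ ^ t with hrdef
  have hr0 : 0 < r := pow_pos hρ0 t
  have hr1 : r ≤ 1 := pow_le_one₀ hρ0.le hρ1.le
  set a := 1 / s with hadef
  set b := 1 / sa with hbdef
  have ha0 : 0 < a := by positivity
  have hb0 : 0 < b := by positivity
  have hbw : b ≤ 1 / w := by
    rw [hbdef]
    exact one_div_le_one_div_of_le hw hsa
  have hab : |a - b| ≤ K * r * a := by
    have : K * r / s = K * r * a := by rw [hadef]; ring
    rw [← this]; exact h1
  have hba : b ≤ (1 + K) * a := by
    have h := (abs_le.1 hab).1
    have hKra : K * r * a ≤ K * a := by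
      have := mul_le_mul_of_nonneg_left hr1 (mul_nonneg hK ha0.le)
      nlinarith
    linarith
  have hX : 0 ≤ x ^ 2 * a := by positivity
  set X := x ^ 2 * a with hXdef
  set d := |ds| * a with hddef
  have hd0 : 0 ≤ d := by positivity
  have h2' : x ^ 2 * b ≤ (1 + K) * X := by
    have h := mul_le_mul_of_nonneg_left hba (sq_nonneg x)
    have heq : x ^ 2 * ((1 + K) * a) = (1 + K) * X := by rw [hXdef]; ring
    linarith
  have hxb0 : 0 ≤ x ^ 2 * b := by positivity
  have hKX : 0 ≤ K * X := mul_nonneg hK hX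
  -- split the difference
  set T1 := (1 / 2) * ds * (a - b) * (x ^ 2 * (a + b) - 1) with hT1
  set T2 := (1 / 2) * (x ^ 2 * b - 1) * b * (ds - dsa) with hT2
  have hsplit : (1 / 2) * (x ^ 2 / s - 1) * (ds / s) - (1 / 2) * (x ^ 2 / sa - 1) * (dsa / sa)
      = T1 + T2 := by
    rw [hT1, hT2, hadef, hbdef]
    field_simp
    ring
  -- bound T1
  have e1 : |x ^ 2 * (a + b) - 1| ≤ (2 + K) * (X + 1) := by
    have hsum : x ^ 2 * (a + b) = X + x ^ 2 * b := by rw [hXdef]; ring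
    rw [abs_le]
    constructor <;> [skip; skip] <;> linarith
  have hT1b : |T1| ≤ (1 / 2) * |ds| * (K * r * a) * ((2 + K) * (X + 1)) := by
    have : |T1| = (1 / 2) * |ds| * |a - b| * |x ^ 2 * (a + b) - 1| := by
      rw [hT1, abs_mul, abs_mul, abs_mul]
      norm_num
    rw [this]
    gcongr
  -- bound T2
  have e2 : |x ^ 2 * b - 1| ≤ (1 + K) * X + 1 := by
    rw [abs_le]
    constructor <;> [skip; skip] <;> linarith
  have hT2b : |T2| ≤ (1 / 2) * ((1 + K) * X + 1) * (1 / w) * (K * r) := by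
    have : |T2| = (1 / 2) * |x ^ 2 * b - 1| * b * |ds - dsa| := by
      rw [hT2, abs_mul, abs_mul, abs_mul, abs_of_pos hb0]
      norm_num
    rw [this]
    gcongr
  -- rewrite goal
  have hxs : x ^ 2 / s = X := by rw [hXdef, hadef]; ring
  have hdabs : |ds / s| = d := by
    have h : ds / s = ds * a := by rw [hadef]; ring
    rw [h, abs_mul, abs_of_pos ha0]
  rw [hsplit, hxs, hdabs]
  have step2 : (1 / 2) * ((1 + K) * X + 1) * (1 / w) * (K * r)
      ≤ K * (1 + K) / (2 * w) * ((1 + X) * r) := by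
    have h : (1 + K) * X + 1 ≤ (1 + K) * (1 + X) := by linarith
    calc (1 / 2) * ((1 + K) * X + 1) * (1 / w) * (K * r)
        = (K * r / (2 * w)) * ((1 + K) * X + 1) := by ring
      _ ≤ (K * r / (2 * w)) * ((1 + K) * (1 + X)) := by
          apply mul_le_mul_of_nonneg_left h (by positivity)
      _ = K * (1 + K) / (2 * w) * ((1 + X) * r) := by ring
  have step3 : K * (2 + K) / 2 * d + K * (1 + K) / (2 * w)
      ≤ (K * (2 + K) / 2 + K * (1 + K) / (2 * w)) * (1 + d) := by
    have hA : 0 ≤ K * (2 + K) / 2 := by positivity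
    have hB : 0 ≤ K * (1 + K) / (2 * w) := by positivity
    linarith [mul_nonneg hB hd0]
  calc |T1 + T2| ≤ |T1| + |T2| := abs_add_le _ _
    _ ≤ (1 / 2) * |ds| * (K * r * a) * ((2 + K) * (X + 1))
        + (1 / 2) * ((1 + K) * X + 1) * (1 / w) * (K * r) := add_le_add hT1b hT2b
    _ ≤ K * (2 + K) / 2 * d * ((1 + X) * r) + K * (1 + K) / (2 * w) * ((1 + X) * r) := by
        have : (1 / 2) * |ds| * (K * r * a) * ((2 + K) * (X + 1))
            = K * (2 + K) / 2 * d * ((1 + X) * r) := by rw [hddef]; ring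
        rw [this]
        exact add_le_add le_rfl step2
    _ = (K * (2 + K) / 2 * d + K * (1 + K) / (2 * w)) * ((1 + X) * r) := by ring
    _ ≤ ((K * (2 + K) / 2 + K * (1 + K) / (2 * w)) * (1 + d)) * ((1 + X) * r) := by
        apply mul_le_mul_of_nonneg_right step3 (by positivity)
    _ = (K * (2 + K) / 2 + K * (1 + K) / (2 * w)) * (1 + X) * (1 + d) * r := by ring
end

section
/- Moments of first derivatives of the DAR(1) quasi-log-likelihood (Lemma A.10 of the paper, first-order part): In the DAR(1) setup, for every real d ≥ 1 and each parameter coordinate θ_i ∈ {φ, ω, α}, E[ sup_{θ∈Θ} |(∂l/∂θ_i)(θ)|^d ] < ∞. -/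
/-!
Put `u = ω + α Y²`. On `Θ` we have `1 + Y² ≤ (c₂⁻¹ + c₄⁻¹) u`, and
`X - φ Y = (φ₀ - φ) Y + e √(ω₀ + α₀ Y²)`, so `(X - φ Y)² / u ≤ const · (1 + e²)`. Every term of
the score is controlled by `(X - φ Y)² / u` and `(1 + Y²) / u` (the mixed term
`|X - φ Y| |Y| / u` by AM-GM), hence `|∂l/∂θᵢ(θ)| ≤ a + b e²` uniformly in `θ ∈ Θ` and in `Y`.
A Gaussian has moments of all orders, so `E[(a + b e²)^d] < ∞`.
-/

open MeasureTheory ProbabilityTheory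

/-- DAR(1) parameter space `Θ = {(φ, ω, α) : |φ| ≤ c₁, c₂ ≤ ω ≤ c₃, c₄ ≤ α ≤ c₅}`. -/
def darTheta (c₁ c₂ c₃ c₄ c₅ : ℝ) : Set (ℝ × ℝ × ℝ) :=
  {θ | |θ.1| ≤ c₁ ∧ c₂ ≤ θ.2.1 ∧ θ.2.1 ≤ c₃ ∧ c₄ ≤ θ.2.2 ∧ θ.2.2 ≤ c₅}

/-- DAR(1) Gaussian quasi-log-likelihood
`l(θ) = -(1/2) log(ω + α Y²) − (X − φ Y)²/(2(ω + α Y²))` for `θ = (φ, ω, α)`. -/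
noncomputable def darL (Y X : ℝ) (θ : ℝ × ℝ × ℝ) : ℝ :=
  -(1 / 2) * Real.log (θ.2.1 + θ.2.2 * Y ^ 2)
    - (X - θ.1 * Y) ^ 2 / (2 * (θ.2.1 + θ.2.2 * Y ^ 2))

theorem fderiv_darL_apply (Y X : ℝ) (θ dir : ℝ × ℝ × ℝ) (h : θ.2.1 + θ.2.2 * Y ^ 2 ≠ 0) :
    fderiv ℝ (darL Y X) θ dir =
      (X - θ.1 * Y) * Y * dir.1 / (θ.2.1 + θ.2.2 * Y ^ 2)
        + ((X - θ.1 * Y) ^ 2 / (2 * (θ.2.1 + θ.2.2 * Y ^ 2) ^ 2)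
            - 1 / (2 * (θ.2.1 + θ.2.2 * Y ^ 2))) * (dir.2.1 + dir.2.2 * Y ^ 2) := by
  have hα : HasFDerivAt (𝕜 := ℝ) (fun p : ℝ × ℝ × ℝ => p.2.2) _ θ := (hasFDerivAt_id θ).snd.snd
  have hu : HasFDerivAt (𝕜 := ℝ) (fun p : ℝ × ℝ × ℝ => p.2.1 + p.2.2 * Y ^ 2) _ θ :=
    (hasFDerivAt_id θ).snd.fst.add (hα.mul_const (Y ^ 2))
  have hv : HasFDerivAt (𝕜 := ℝ) (fun p : ℝ × ℝ × ℝ => X - p.1 * Y) _ θ :=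
    ((hasFDerivAt_id θ).fst.mul_const Y).const_sub X
  have hw := (hasDerivAt_inv (mul_ne_zero two_ne_zero h)).comp_hasFDerivAt θ (hu.const_mul 2)
  have hl := ((hu.log h).const_mul (-(1 / 2))).sub ((hv.pow 2).mul hw)
  have hl' : HasFDerivAt (darL Y X) _ θ := hl.congr_of_eventuallyEq
    (.of_forall fun _ => congrArg (_ - ·) (div_eq_mul_inv _ _))
  rw [hl'.fderiv]
  simp only [one_div, ContinuousLinearMap.comp_id, smul_add, neg_smul, smul_neg,
    Function.comp_apply, mul_inv_rev, Nat.add_one_sub_one, pow_one, nsmul_eq_mul, Nat.cast_ofNat,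
    sub_apply, add_apply, neg_apply, smul_apply, ContinuousLinearMap.comp_apply,
    ContinuousLinearMap.coe_snd', ContinuousLinearMap.coe_fst', smul_eq_mul]
  field_simp
  ring

lemma one_add_sq_le_mul {a b ω α : ℝ} (ha : 0 < a) (hb : 0 < b) (hω : a ≤ ω) (hα : b ≤ α)
    (y : ℝ) : 1 + y ^ 2 ≤ (a⁻¹ + b⁻¹) * (ω + α * y ^ 2) := by
  have h₁ : 1 ≤ a⁻¹ * ω := (one_le_inv_mul₀ ha).mpr hω
  have h₂ : 1 ≤ b⁻¹ * α := (one_le_inv_mul₀ hb).mpr hα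
  have : 0 ≤ a⁻¹ * α * y ^ 2 + b⁻¹ * ω := by
    have := ha.le.trans hω; have := hb.le.trans hα; positivity
  nlinarith [sq_nonneg y]

lemma abs_score_le {u y v B d₁ d₂ d₃ : ℝ} (hu : 0 < u) (hy : 1 + y ^ 2 ≤ B * u)
    (hd₁ : |d₁| ≤ 1) (hd₂ : |d₂| ≤ 1) (hd₃ : |d₃| ≤ 1) :
    |v * y * d₁ / u + (v ^ 2 / (2 * u ^ 2) - 1 / (2 * u)) * (d₂ + d₃ * y ^ 2)|
      ≤ (1 + B) / 2 * (v ^ 2 / u) + B := by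
  have hB : 0 ≤ B := by
    by_contra! hB; nlinarith [sq_nonneg y]
  have hlin : |v * y * d₁ / u| ≤ (v ^ 2 / u + B) / 2 := by
    rw [abs_div, abs_of_pos hu, div_le_iff₀ hu, abs_mul, abs_mul]
    have : |v| * |y| ≤ (v ^ 2 + y ^ 2) / 2 := by
      nlinarith [sq_nonneg (|v| - |y|), sq_abs v, sq_abs y]
    have := mul_le_of_le_one_right (by positivity) hd₁ (a := |v| * |y|)
    field_simp
    nlinarith
  have hdir : |d₂ + d₃ * y ^ 2| ≤ 1 + y ^ 2 := by
    calc |d₂ + d₃ * y ^ 2| ≤ |d₂| + |d₃| * y ^ 2 :=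
          (abs_add_le _ _).trans_eq (by rw [abs_mul, abs_of_nonneg (sq_nonneg y)])
      _ ≤ 1 + 1 * y ^ 2 := by gcongr
      _ = 1 + y ^ 2 := by ring
  have hquad : |(v ^ 2 / (2 * u ^ 2) - 1 / (2 * u)) * (d₂ + d₃ * y ^ 2)|
      ≤ B / 2 * (v ^ 2 / u + 1) := by
    have hcoef : |v ^ 2 / (2 * u ^ 2) - 1 / (2 * u)| ≤ (v ^ 2 / u + 1) / (2 * u) := by
      rw [abs_le]; constructor <;> field_simp <;> nlinarith [sq_nonneg v]
    calc _ = |v ^ 2 / (2 * u ^ 2) - 1 / (2 * u)| * |d₂ + d₃ * y ^ 2| := abs_mul _ _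
      _ ≤ (v ^ 2 / u + 1) / (2 * u) * (B * u) := by
          gcongr
          · exact hdir.trans hy
      _ = B / 2 * (v ^ 2 / u + 1) := by field_simp
  calc _ ≤ |v * y * d₁ / u| + |(v ^ 2 / (2 * u ^ 2) - 1 / (2 * u)) * (d₂ + d₃ * y ^ 2)| :=
        abs_add_le _ _
    _ ≤ (v ^ 2 / u + B) / 2 + B / 2 * (v ^ 2 / u + 1) := add_le_add hlin hquad
    _ = (1 + B) / 2 * (v ^ 2 / u) + B := by ring

lemma sq_innovation_div_le {u y δ k e ω₀ α₀ B : ℝ} (hu : 0 < u) (hy : 1 + y ^ 2 ≤ B * u)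
    (hδ : |δ| ≤ k) (hω₀ : 0 ≤ ω₀) (hα₀ : 0 ≤ α₀) :
    (δ * y + e * √(ω₀ + α₀ * y ^ 2)) ^ 2 / u ≤ 2 * B * (k ^ 2 + (ω₀ + α₀) * e ^ 2) := by
  rw [div_le_iff₀ hu]
  have hs : √(ω₀ + α₀ * y ^ 2) ^ 2 = ω₀ + α₀ * y ^ 2 := Real.sq_sqrt (by positivity)
  have hδ2 : δ ^ 2 ≤ k ^ 2 := sq_le_sq' (abs_le.mp hδ).1 (abs_le.mp hδ).2
  have hy2 : y ^ 2 ≤ B * u := by nlinarith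
  have hvar : ω₀ + α₀ * y ^ 2 ≤ (ω₀ + α₀) * (B * u) := by nlinarith [sq_nonneg y]
  calc (δ * y + e * √(ω₀ + α₀ * y ^ 2)) ^ 2
      ≤ 2 * (δ ^ 2 * y ^ 2) + 2 * (e ^ 2 * √(ω₀ + α₀ * y ^ 2) ^ 2) := by
        nlinarith [sq_nonneg (δ * y - e * √(ω₀ + α₀ * y ^ 2))]
    _ ≤ 2 * (k ^ 2 * (B * u)) + 2 * (e ^ 2 * ((ω₀ + α₀) * (B * u))) := by
        rw [hs]; gcongr
    _ = 2 * B * (k ^ 2 + (ω₀ + α₀) * e ^ 2) * u := by ring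

lemma abs_fderiv_darL_le_quadratic {c₁ c₂ c₃ c₄ c₅ φ₀ ω₀ α₀ : ℝ} (hc₂ : 0 < c₂) (hc₄ : 0 < c₄)
    (hφ₀ : |φ₀| ≤ c₁) (hω₀ : 0 ≤ ω₀) (hα₀ : 0 ≤ α₀) :
    ∃ a b : ℝ, 0 ≤ a ∧ 0 ≤ b ∧ ∀ y e : ℝ, ∀ θ ∈ darTheta c₁ c₂ c₃ c₄ c₅, ∀ dir : ℝ × ℝ × ℝ,
      |dir.1| ≤ 1 → |dir.2.1| ≤ 1 → |dir.2.2| ≤ 1 →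
        |fderiv ℝ (darL y (φ₀ * y + e * √(ω₀ + α₀ * y ^ 2))) θ dir| ≤ a + b * e ^ 2 := by
  set B := c₂⁻¹ + c₄⁻¹
  have hc₁ : 0 ≤ c₁ := (abs_nonneg φ₀).trans hφ₀
  refine ⟨(1 + B) * B * (2 * c₁) ^ 2 + B, (1 + B) * B * (ω₀ + α₀), by positivity, by positivity, ?_⟩
  rintro y e θ ⟨hφ, hω, -, hα, -⟩ dir hd₁ hd₂ hd₃
  have hu : 0 < θ.2.1 + θ.2.2 * y ^ 2 := by nlinarith [sq_nonneg y]
  have hy := one_add_sq_le_mul hc₂ hc₄ hω hα y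
  have hδ : |φ₀ - θ.1| ≤ 2 * c₁ := (abs_sub _ _).trans (by linarith)
  rw [fderiv_darL_apply _ _ _ _ hu.ne',
    show φ₀ * y + e * √(ω₀ + α₀ * y ^ 2) - θ.1 * y = (φ₀ - θ.1) * y + e * √(ω₀ + α₀ * y ^ 2)
      by ring]
  calc _ ≤ (1 + B) / 2 * (((φ₀ - θ.1) * y + e * √(ω₀ + α₀ * y ^ 2)) ^ 2
          / (θ.2.1 + θ.2.2 * y ^ 2)) + B := abs_score_le hu hy hd₁ hd₂ hd₃
    _ ≤ (1 + B) / 2 * (2 * B * ((2 * c₁) ^ 2 + (ω₀ + α₀) * e ^ 2)) + B := by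
        gcongr
        exact sq_innovation_div_le hu hy hδ hω₀ hα₀
    _ = _ := by ring

lemma lintegral_rpow_quadratic_gaussianReal_lt_top (μ : ℝ) (v : NNReal) {a b d : ℝ}
    (ha : 0 ≤ a) (hb : 0 ≤ b) (hd : 0 < d) :
    ∫⁻ x, ENNReal.ofReal ((a + b * x ^ 2) ^ d) ∂(gaussianReal μ v) < ⊤ := by
  set p := ENNReal.ofReal d
  have hsq : MemLp (fun x : ℝ => x ^ 2) p (gaussianReal μ v) := by
    have := (memLp_id_gaussianReal' (μ := μ) (v := v) (2 * p) (by finiteness)).norm_rpow_div 2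
    rw [mul_comm, ENNReal.mul_div_cancel_right two_ne_zero ENNReal.ofNat_ne_top] at this
    simpa using this
  have hq : MemLp (fun x : ℝ => a + b * x ^ 2) p (gaussianReal μ v) :=
    (memLp_const a).add (hsq.const_mul b)
  have := (hq.integrable_norm_rpow (by simpa [p] using hd) ENNReal.ofReal_ne_top).lintegral_lt_top
  convert this using 4 with x
  rw [ENNReal.toReal_ofReal hd.le, Real.norm_of_nonneg (by positivity)]

theorem stmt13_general {Ω : Type*} [MeasurableSpace Ω] (P : Measure Ω)
    (c₁ c₂ c₃ c₄ c₅ : ℝ)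
    (hc₂ : 0 < c₂) (hc₄ : 0 < c₄)
    (φ₀ ω₀ α₀ : ℝ) (hθ₀ : (φ₀, ω₀, α₀) ∈ darTheta c₁ c₂ c₃ c₄ c₅)
    (Y e : Ω → ℝ) (he : Measurable e)
    (heG : P.map e = gaussianReal 0 1) :
    ∀ d : ℝ, 1 ≤ d →
      ∀ dir ∈ ({(1, 0, 0), (0, 1, 0), (0, 0, 1)} : Set (ℝ × ℝ × ℝ)),
        ∫⁻ ω', ⨆ θ ∈ darTheta c₁ c₂ c₃ c₄ c₅,
          ENNReal.ofReal
            (|fderiv ℝ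
                (darL (Y ω') (φ₀ * Y ω' + e ω' * Real.sqrt (ω₀ + α₀ * Y ω' ^ 2))) θ dir|
              ^ d) ∂P < ⊤ := by
  intro d hd dir hdir
  obtain ⟨hφ₀, hω₀, -, hα₀, -⟩ := hθ₀
  obtain ⟨a, b, ha, hb, hscore⟩ := abs_fderiv_darL_le_quadratic (c₃ := c₃) (c₅ := c₅)
    hc₂ hc₄ hφ₀ (hc₂.le.trans hω₀) (hc₄.le.trans hα₀)
  have hdir : |dir.1| ≤ 1 ∧ |dir.2.1| ≤ 1 ∧ |dir.2.2| ≤ 1 := by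
    simp only [Set.mem_insert_iff, Set.mem_singleton_iff] at hdir
    rcases hdir with rfl | rfl | rfl <;> norm_num
  calc _ ≤ ∫⁻ ω', ENNReal.ofReal ((a + b * e ω' ^ 2) ^ d) ∂P :=
        lintegral_mono fun ω' => iSup₂_le fun θ hθ => ENNReal.ofReal_le_ofReal <|
          Real.rpow_le_rpow (abs_nonneg _)
            (hscore (Y ω') (e ω') θ hθ dir hdir.1 hdir.2.1 hdir.2.2) (by linarith)
    _ = ∫⁻ x, ENNReal.ofReal ((a + b * x ^ 2) ^ d) ∂(P.map e) :=
        (lintegral_map (f := fun x => ENNReal.ofReal ((a + b * x ^ 2) ^ d)) (by fun_prop) he).symm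
    _ < ⊤ := heG ▸ lintegral_rpow_quadratic_gaussianReal_lt_top 0 1 ha hb (by linarith)

/-- Lemma A.10, first-order part: in the DAR(1) setup with standard Gaussian innovation
`e` independent of `Y` and `X = φ₀ Y + e √(ω₀ + α₀ Y²)`, for every `d ≥ 1` and each
parameter coordinate (direction `(1,0,0)`, `(0,1,0)` or `(0,0,1)` for `φ, ω, α`),
`E[sup_{θ∈Θ} |∂l/∂θᵢ(θ)|^d] < ∞`. -/
theorem stmt13 {Ω : Type*} [MeasurableSpace Ω] (P : Measure Ω) [IsProbabilityMeasure P]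
    (c₁ c₂ c₃ c₄ c₅ : ℝ)
    (hc₁ : 0 < c₁) (hc₂ : 0 < c₂) (hc₃ : 0 < c₃) (hc₄ : 0 < c₄) (hc₅ : 0 < c₅)
    (φ₀ ω₀ α₀ : ℝ) (hθ₀ : (φ₀, ω₀, α₀) ∈ darTheta c₁ c₂ c₃ c₄ c₅)
    (Y e : Ω → ℝ) (hY : Measurable Y) (he : Measurable e)
    (heG : P.map e = gaussianReal 0 1) (hind : IndepFun Y e P) :
    ∀ d : ℝ, 1 ≤ d →
      ∀ dir ∈ ({(1, 0, 0), (0, 1, 0), (0, 0, 1)} : Set (ℝ × ℝ × ℝ)),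
        ∫⁻ ω', ⨆ θ ∈ darTheta c₁ c₂ c₃ c₄ c₅,
          ENNReal.ofReal
            (|fderiv ℝ
                (darL (Y ω') (φ₀ * Y ω' + e ω' * Real.sqrt (ω₀ + α₀ * Y ω' ^ 2))) θ dir|
              ^ d) ∂P < ⊤ :=
  stmt13_general P c₁ c₂ c₃ c₄ c₅ hc₂ hc₄ φ₀ ω₀ α₀ hθ₀ Y e he heG
end
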